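/- arXiv:math/9811187 — 7 statements merged into one kernel-verified Lean document; each statement's English description precedes it below -/
import Mathlib

section
/- Let k, r, p > 0 and F: ℕ^k → ℕ^r be a function satisfying |F(x)| ≤ min(x) for all x ∈ ℕ^k. Then there exists a set E ⊆ ℕ with |E| = p such that the image F[E^k] has cardinality at most k^k · p. -/
/-!
Choose `e₀ < e₁ < ⋯` one at a time, applying the infinite Ramsey theorem at stage `n` to the
colouring of the later `(k-1)`-tuples by the values of `F` on all order patterns built from `eₙ`
and the tuple. Since `F x ≤ min x`, these values may be truncated at `eₙ`, so the colouring is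
finite. For `E = {e₀, …, e_{p-1}}`, the value `F x` at `x ∈ E^k` then depends only on the index
of `min x` (`p` choices) and on an order pattern `Fin k → Fin k` (`k^k` choices).
-/

open Set

def IsHomogeneous {m : ℕ} {β : Type*} (c : (Fin m → ℕ) → β) (H : Set ℕ) : Prop :=
  ∀ x y : Fin m → ℕ, StrictMono x → StrictMono y → (∀ i, x i ∈ H) → (∀ i, y i ∈ H) → c x = c y

theorem IsHomogeneous.mono {m : ℕ} {β : Type*} {c : (Fin m → ℕ) → β} {V W : Set ℕ}
    (h : IsHomogeneous c V) (hWV : W ⊆ V) : IsHomogeneous c W :=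
  fun x y hx hy hxW hyW => h x y hx hy (fun i => hWV (hxW i)) (fun i => hWV (hyW i))

theorem Set.Infinite.exists_strictMono_forall_image_Ioi {S : Set ℕ} (hS : S.Infinite)
    (P : ℕ → Set ℕ → Prop) (hP : ∀ a {V W}, W ⊆ V → P a V → P a W)
    (step : ∀ a U, U.Infinite → ∃ V ⊆ U, V.Infinite ∧ P a V) :
    ∃ e : ℕ → ℕ, StrictMono e ∧ (∀ n, e n ∈ S) ∧ ∀ n, P (e n) (e '' Ioi n) := by
  choose V hVU hVinf hPV using step
  let next (U : {U : Set ℕ // U.Infinite}) : {U : Set ℕ // U.Infinite} :=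
    ⟨V (sInf U.1) (U.1 \ Iic (sInf U.1)) (U.2.sdiff (finite_Iic _)), hVinf _ _ _⟩
  let U (n : ℕ) : Set ℕ := (next^[n] ⟨S, hS⟩).1
  let e (n : ℕ) : ℕ := sInf (U n)
  have he_mem (n : ℕ) : e n ∈ U n := Nat.sInf_mem (next^[n] ⟨S, hS⟩).2.nonempty
  have hU_succ (n : ℕ) : U (n + 1) ⊆ U n \ Iic (e n) := by
    simp only [U, Function.iterate_succ_apply']
    exact hVU _ _ _
  have hP_succ (n : ℕ) : P (e n) (U (n + 1)) := by
    simp only [U, Function.iterate_succ_apply']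
    exact hPV _ _ _
  have hU_anti : Antitone U := antitone_nat_of_succ_le fun n => (hU_succ n).trans sdiff_subset
  have he_lt (n : ℕ) {x : ℕ} (hx : x ∈ U (n + 1)) : e n < x := not_le.mp (hU_succ n hx).2
  refine ⟨e, strictMono_nat_of_lt_succ fun n => he_lt n (he_mem _),
    fun n => hU_anti (Nat.zero_le n) (he_mem n), fun n => hP _ ?_ (hP_succ n)⟩
  rintro _ ⟨n', hn', rfl⟩
  exact hU_anti (Nat.succ_le_of_lt hn') (he_mem n')

theorem StrictMono.comp_add_one_add {e : ℕ → ℕ} (he : StrictMono e) (n m : ℕ) :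
    StrictMono fun i : Fin m => e (n + 1 + i) :=
  he.comp fun i j h => by simpa using h

theorem Set.Infinite.exists_infinite_isHomogeneous {β : Type*} [Finite β] :
    ∀ {m : ℕ} (c : (Fin m → ℕ) → β) {S : Set ℕ}, S.Infinite →
      ∃ H ⊆ S, H.Infinite ∧ IsHomogeneous c H
  | 0, c, S, hS => ⟨S, subset_rfl, hS, fun x y _ _ _ _ => congrArg c (Subsingleton.elim x y)⟩
  | m + 1, c, S, hS => by
    obtain ⟨e, he, heS, hhom⟩ := hS.exists_strictMono_forall_image_Ioi
      (fun a V => IsHomogeneous (fun z => c (Fin.cons a z)) V) (fun _ _ _ hWV h => h.mono hWV)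
      (fun _ _ hU => hU.exists_infinite_isHomogeneous _)
    let col (n : ℕ) : β := c (Fin.cons (e n) fun i => e (n + 1 + i))
    obtain ⟨b, hb⟩ := Finite.exists_infinite_fiber col
    have hb' : (col ⁻¹' {b}).Infinite := infinite_coe_iff.mp hb
    suffices hcol : ∀ x, StrictMono x → (∀ i, x i ∈ e '' (col ⁻¹' {b})) → c x = b from
      ⟨e '' (col ⁻¹' {b}), by rintro _ ⟨n, -, rfl⟩; exact heS n, hb'.image he.injective.injOn,
        fun x y hx hy hxH hyH => (hcol x hx hxH).trans (hcol y hy hyH).symm⟩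
    intro x hx hxH
    obtain ⟨n, hn, hxn⟩ := hxH 0
    have htail (i : Fin m) : Fin.tail x i ∈ e '' Ioi n := by
      obtain ⟨n', -, hxn'⟩ := hxH i.succ
      refine ⟨n', he.lt_iff_lt.mp ?_, hxn'⟩
      rw [hxn, hxn']
      exact hx i.succ_pos
    calc c x = c (Fin.cons (e n) (Fin.tail x)) := by rw [hxn, Fin.cons_self_tail]
      _ = col n := hhom n _ _ (hx.comp Fin.strictMono_succ) (he.comp_add_one_add n m) htail
            fun i => ⟨n + 1 + i, by simp only [mem_Ioi]; omega, rfl⟩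
      _ = b := hn

theorem exists_strictMono_range_subset {m : ℕ} (x : Fin (m + 1) → ℕ) :
    ∃ y : Fin (m + 1) → ℕ, StrictMono y ∧ y 0 ∈ range x ∧ range x ⊆ range y := by
  classical
  let s := Finset.univ.image x
  have hs : s.Nonempty := Finset.univ_nonempty.image x
  obtain ⟨u, hsu, hu, hcard⟩ := Finset.exists_subsuperset_card_eq
    (t := Finset.Icc (s.min' hs) (s.max' hs + m)) (n := m + 1)
    (fun v hv => Finset.mem_Icc.mpr ⟨s.min'_le v hv, (s.le_max' v hv).trans (Nat.le_add_right _ _)⟩)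
    (Finset.card_image_le.trans (by simp))
    (by simp only [Nat.card_Icc]; have := s.min'_le_max' hs; omega)
  have hmin : u.min' (hs.mono hsu) = s.min' hs :=
    le_antisymm (u.min'_le _ (hsu (s.min'_mem hs)))
      (u.le_min' _ _ fun v hv => (Finset.mem_Icc.mp (hu hv)).1)
  refine ⟨u.orderEmbOfFin hcard, (u.orderEmbOfFin hcard).strictMono, ?_, ?_⟩
  · rw [← Fin.mk_zero, Finset.orderEmbOfFin_zero hcard m.succ_pos, hmin]
    simpa [s] using s.min'_mem hs
  · rw [Finset.range_orderEmbOfFin]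
    rintro _ ⟨i, rfl⟩
    exact hsu (Finset.mem_image_of_mem x (Finset.mem_univ i))

-- Truncation at `a` loses nothing on the tuples with minimum `a`, as `F x ≤ min x`.
def truncColor {m r : ℕ} (F : (Fin (m + 1) → ℕ) → Fin r → ℕ) (a : ℕ) (z : Fin m → ℕ) :
    (Fin (m + 1) → Fin (m + 1)) → Fin r → Fin (a + 1) :=
  fun σ j => ⟨min (F (Fin.cons a z ∘ σ) j) a, Nat.lt_succ_of_le (min_le_right _ _)⟩

theorem exists_finset_image_subset_range {m r : ℕ} (F : (Fin (m + 1) → ℕ) → Fin r → ℕ)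
    (hF : ∀ x j i, F x j ≤ x i) (p : ℕ) :
    ∃ E : Finset ℕ, E.card = p ∧ ∃ G : Fin p × (Fin (m + 1) → Fin (m + 1)) → Fin r → ℕ,
      F '' {x | ∀ i, x i ∈ E} ⊆ range G := by
  obtain ⟨e, he, -, hhom⟩ := infinite_univ.exists_strictMono_forall_image_Ioi
    (fun a V => IsHomogeneous (truncColor F a) V) (fun _ _ _ hWV h => h.mono hWV)
    (fun _ _ hU => hU.exists_infinite_isHomogeneous _)
  refine ⟨(Finset.range p).image e, by rw [Finset.card_image_of_injective _ he.injective,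
    Finset.card_range], fun q j => truncColor F (e q.1) (fun i => e (q.1 + 1 + i)) q.2 j, ?_⟩
  rintro _ ⟨x, hx, rfl⟩
  choose ι hιp hι using fun i => Finset.mem_image.mp (hx i)
  obtain ⟨y, hy, ⟨i₀, hi₀⟩, hιy⟩ := exists_strictMono_range_subset ι
  choose σ hσ using fun i => hιy ⟨i, rfl⟩
  have hx_eq : x = Fin.cons (e (y 0)) (Fin.tail (e ∘ y)) ∘ σ := by
    change x = Fin.cons ((e ∘ y) 0) (Fin.tail (e ∘ y)) ∘ σ
    rw [Fin.cons_self_tail]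
    funext i
    simp [hσ, hι]
  have htail (i : Fin m) : Fin.tail (e ∘ y) i ∈ e '' Ioi (y 0) :=
    ⟨y i.succ, hy i.succ_pos, rfl⟩
  refine ⟨(⟨y 0, hi₀ ▸ Finset.mem_range.mp (hιp i₀)⟩, σ), funext fun j => ?_⟩
  calc _ = (truncColor F (e (y 0)) (Fin.tail (e ∘ y)) σ j : ℕ) :=
        congrArg (fun c => (c σ j : ℕ)) <| hhom (y 0) _ _ (he.comp_add_one_add _ m)
          ((he.comp hy).comp Fin.strictMono_succ)
          (fun i => ⟨y 0 + 1 + i, by simp only [mem_Ioi]; omega, rfl⟩) htail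
    _ = min (F x j) (e (y 0)) := by rw [hx_eq]; rfl
    _ = F x j := min_eq_left (hi₀ ▸ hι i₀ ▸ hF x j i₀)

theorem stmt_0_general (k r p : ℕ) (hk : 0 < k)
    (F : (Fin k → ℕ) → (Fin r → ℕ))
    (hF : ∀ x : Fin k → ℕ, (⨆ i, F x i) ≤ ⨅ i, x i) :
    ∃ E : Finset ℕ, E.card = p ∧
      (F '' {x : Fin k → ℕ | ∀ i, x i ∈ E}).Finite ∧
      (F '' {x : Fin k → ℕ | ∀ i, x i ∈ E}).ncard ≤ k ^ k * p := by
  obtain ⟨m, rfl⟩ : ∃ m, k = m + 1 := ⟨k - 1, by omega⟩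
  have hF' (x : Fin (m + 1) → ℕ) (j : Fin r) (i : Fin (m + 1)) : F x j ≤ x i :=
    calc F x j ≤ ⨆ j, F x j := le_ciSup (finite_range _).bddAbove j
      _ ≤ ⨅ i, x i := hF x
      _ ≤ x i := ciInf_le (OrderBot.bddBelow _) i
  obtain ⟨E, hE, G, hFG⟩ := exists_finset_image_subset_range F hF' p
  refine ⟨E, hE, (finite_range G).subset hFG, ?_⟩
  calc _ ≤ (range G).ncard := ncard_le_ncard hFG (finite_range G)
    _ ≤ Nat.card (Fin p × (Fin (m + 1) → Fin (m + 1))) := Finite.card_range_le G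
    _ = (m + 1) ^ (m + 1) * p := by simp [Nat.mul_comm]

/-- Theorem 0.1: any `F : ℕ^k → ℕ^r` with `|F(x)| ≤ min(x)` has small image on
some `E^k` with `|E| = p`. -/
theorem stmt_0 (k r p : ℕ) (hk : 0 < k) (hr : 0 < r) (hp : 0 < p)
    (F : (Fin k → ℕ) → (Fin r → ℕ))
    (hF : ∀ x : Fin k → ℕ, (⨆ i, F x i) ≤ ⨅ i, x i) :
    ∃ E : Finset ℕ, E.card = p ∧
      (F '' {x : Fin k → ℕ | ∀ i, x i ∈ E}).Finite ∧
      (F '' {x : Fin k → ℕ | ∀ i, x i ∈ E}).ncard ≤ k ^ k * p :=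
  stmt_0_general k r p hk F hF
end

section
/- Let k, r, p > 0 and F: ℕ^k → ℕ^r be any function. Then there exists a set E ⊆ ℕ with |E| = p such that F has at most k^k · p regressive values on E^k. -/
/-- Generic chain construction: iterate a step that refines an infinite set. -/
lemma exists_chain (P : ℕ → Set ℕ → Prop) (S : Set ℕ) (hS : S.Infinite)
    (step : ∀ A : Set ℕ, A.Infinite →
      ∃ a B, a ∈ A ∧ B ⊆ A ∧ B.Infinite ∧ (∀ b ∈ B, a < b) ∧ P a B) :
    ∃ (a : ℕ → ℕ) (B : ℕ → Set ℕ), B 0 = S ∧ (∀ m, a m ∈ B m) ∧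
      (∀ m, (B m).Infinite) ∧ (∀ m, B (m+1) ⊆ B m) ∧
      (∀ m, ∀ b ∈ B (m+1), a m < b) ∧ (∀ m, P (a m) (B (m+1))) := by
  choose f g h1 h2 h3 h4 h5 using step
  let Bc : ℕ → {A : Set ℕ // A.Infinite} :=
    fun m => Nat.rec ⟨S, hS⟩ (fun _ prev => ⟨g prev.1 prev.2, h3 prev.1 prev.2⟩) m
  refine ⟨fun m => f (Bc m).1 (Bc m).2, fun m => (Bc m).1, rfl,
    fun m => h1 _ _, fun m => (Bc m).2, fun m => h2 _ _, fun m => h4 _ _, fun m => h5 _ _⟩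

/-- Infinite Ramsey theorem for colorings of increasing `n`-tuples with finitely
many colors. -/
theorem myRamsey : ∀ (n : ℕ) {γ : Type} [Finite γ] (c : (Fin n → ℕ) → γ)
    (S : Set ℕ), S.Infinite →
    ∃ H, H ⊆ S ∧ H.Infinite ∧ ∀ t t' : Fin n → ℕ, StrictMono t → (∀ i, t i ∈ H) →
      StrictMono t' → (∀ i, t' i ∈ H) → c t = c t' := by
  intro n
  induction n with
  | zero =>
    intro γ _ c S hS
    refine ⟨S, le_refl _, hS, fun t t' _ _ _ _ => ?_⟩
    have : t = t' := funext fun i => i.elim0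
    rw [this]
  | succ n ih =>
    intro γ _ c S hS
    -- step lemma
    have step : ∀ A : Set ℕ, A.Infinite →
        ∃ a B, a ∈ A ∧ B ⊆ A ∧ B.Infinite ∧ (∀ b ∈ B, a < b) ∧
          (∀ t t' : Fin n → ℕ, StrictMono t → (∀ i, t i ∈ B) →
            StrictMono t' → (∀ i, t' i ∈ B) →
            c (Fin.cons a t) = c (Fin.cons a t')) := by
      intro A hA
      obtain ⟨a, ha⟩ := hA.nonempty
      have hA' : (A \ {x | x ≤ a}).Infinite := hA.diff (Set.finite_le_nat a)
      obtain ⟨H, hHsub, hHinf, hom⟩ := ih (fun t => c (Fin.cons a t)) _ hA'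
      refine ⟨a, H, ha, fun b hb => (hHsub hb).1, hHinf, ?_, ?_⟩
      · intro b hb
        exact lt_of_not_ge (hHsub hb).2
      · intro t t' ht htm ht' htm'
        exact hom t t' ht htm ht' htm'
    obtain ⟨a, B, hB0, hmem, hinf, hsub, hgt, hP⟩ :=
      exists_chain (fun a B => ∀ t t' : Fin n → ℕ, StrictMono t → (∀ i, t i ∈ B) →
        StrictMono t' → (∀ i, t' i ∈ B) → c (Fin.cons a t) = c (Fin.cons a t')) S hS step
    have hanti : ∀ {m m'}, m ≤ m' → B m' ⊆ B m := by
      intro m m' h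
      induction h with
      | refl => exact le_refl _
      | step h ih => exact (hsub _).trans ih
    have ha : StrictMono a := strictMono_nat_of_lt_succ fun m => hgt m _ (hmem (m+1))
    -- canonical tails
    let ct : ℕ → Fin n → ℕ := fun m l => Nat.nth (· ∈ B (m+1)) l
    have hctmem : ∀ m l, ct m l ∈ B (m+1) := fun m l =>
      Nat.nth_mem_of_infinite (hinf (m+1)) l
    have hctmono : ∀ m, StrictMono (ct m) := fun m i j hij =>
      Nat.nth_strictMono (hinf (m+1)) (show (i : ℕ) < j from hij)
    let g : ℕ → γ := fun m => c (Fin.cons (a m) (ct m))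
    obtain ⟨y, hy⟩ := Finite.exists_infinite_fiber g
    have hI : (g ⁻¹' {y}).Infinite := Set.infinite_coe_iff.mp hy
    refine ⟨a '' (g ⁻¹' {y}), ?_, hI.image (ha.injective.injOn), ?_⟩
    · rintro _ ⟨m, _, rfl⟩
      rw [← hB0]
      exact hanti (Nat.zero_le m) (hmem m)
    · -- main homogeneity claim
      have key : ∀ t : Fin (n+1) → ℕ, StrictMono t → (∀ i, t i ∈ a '' (g ⁻¹' {y})) →
          c t = y := by
        intro t ht htm
        obtain ⟨m, hmI, hm⟩ := htm 0
        have htail : ∀ l : Fin n, Fin.tail t l ∈ B (m+1) := by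
          intro l
          obtain ⟨m', _, hm'⟩ := htm l.succ
          have h1 : a m < a m' := by
            rw [hm, hm']
            exact ht (Fin.succ_pos l)
          have h2 : m < m' := ha.lt_iff_lt.mp h1
          show t l.succ ∈ B (m+1)
          rw [← hm']
          exact hanti h2 (hmem m')
        have htt : StrictMono (Fin.tail t) := fun i j hij =>
          ht (by simpa [Fin.succ_lt_succ_iff] using hij)
        have h3 : c (Fin.cons (a m) (Fin.tail t)) = c (Fin.cons (a m) (ct m)) :=
          hP m _ _ htt htail (hctmono m) (fun l => hctmem m l)
        have h4 : Fin.cons (t 0) (Fin.tail t) = t := Fin.cons_self_tail t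
        rw [← h4, ← hm, h3]
        exact hmI
      intro t t' ht htm ht' htm'
      rw [key t ht htm, key t' ht' htm']

/-- Auxiliary coloring recording the (regressive) value of `F` on the tuple built
from head `a`, tail `t` and pattern `ρ`. -/
noncomputable def auxCol {k r : ℕ} (F : (Fin (k+1) → ℕ) → (Fin r → ℕ)) (a : ℕ)
    (t : Fin k → ℕ) (ρ : Fin (k+1) → Fin (k+1)) : Option (Fin r → Fin a) :=
  if h : (⨆ i, F (Fin.cons a t ∘ ρ) i) < a then
    some (fun i => ⟨F (Fin.cons a t ∘ ρ) i,
      lt_of_le_of_lt (le_ciSup (Set.Finite.bddAbove (Set.finite_range _)) i) h⟩)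
  else none

lemma auxCol_eq {k r : ℕ} {F : (Fin (k+1) → ℕ) → (Fin r → ℕ)} {a : ℕ}
    {t t' : Fin k → ℕ} {ρ : Fin (k+1) → Fin (k+1)}
    (h : auxCol F a t ρ = auxCol F a t' ρ)
    (hc : (⨆ i, F (Fin.cons a t ∘ ρ) i) < a) :
    F (Fin.cons a t ∘ ρ) = F (Fin.cons a t' ∘ ρ) := by
  unfold auxCol at h
  rw [dif_pos hc] at h
  by_cases hc' : (⨆ i, F (Fin.cons a t' ∘ ρ) i) < a
  · rw [dif_pos hc'] at h
    funext i
    exact congrArg Fin.val (congrFun (Option.some.inj h) i)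
  · rw [dif_neg hc'] at h
    exact absurd h (by simp)
/-- The set of regressive values of `F` on `B`: values `y` attained at some `x ∈ B`
with `max y < min x`. -/
def regressiveValues {k r : ℕ} (F : (Fin k → ℕ) → (Fin r → ℕ))
    (B : Set (Fin k → ℕ)) : Set (Fin r → ℕ) :=
  {y | ∃ x ∈ B, F x = y ∧ (⨆ i, y i) < ⨅ i, x i}

/-- Theorem 0.2: any `F : ℕ^k → ℕ^r` has at most `k^k · p` regressive values on
some `E^k` with `|E| = p`. -/
theorem stmt_1 (k r p : ℕ) (hk : 0 < k) (hr : 0 < r) (hp : 0 < p)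
    (F : (Fin k → ℕ) → (Fin r → ℕ)) :
    ∃ E : Finset ℕ, E.card = p ∧
      (regressiveValues F {x | ∀ i, x i ∈ E}).Finite ∧
      (regressiveValues F {x | ∀ i, x i ∈ E}).ncard ≤ k ^ k * p := by
  classical
  obtain ⟨k', rfl⟩ : ∃ k', k = k' + 1 := ⟨k - 1, (Nat.succ_pred_eq_of_pos hk).symm⟩
  -- step: refine an infinite set to be homogeneous for all patterns with a fixed head
  have step : ∀ A : Set ℕ, A.Infinite →
      ∃ a B, a ∈ A ∧ B ⊆ A ∧ B.Infinite ∧ (∀ b ∈ B, a < b) ∧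
        (∀ t t' : Fin k' → ℕ, StrictMono t → (∀ l, t l ∈ B) →
          StrictMono t' → (∀ l, t' l ∈ B) →
          ∀ ρ : Fin (k'+1) → Fin (k'+1), auxCol F a t ρ = auxCol F a t' ρ) := by
    intro A hA
    obtain ⟨a, ha⟩ := hA.nonempty
    have hA' : (A \ {x | x ≤ a}).Infinite := hA.diff (Set.finite_le_nat a)
    obtain ⟨H, hHsub, hHinf, hom⟩ := myRamsey k' (fun t => auxCol F a t) _ hA'
    refine ⟨a, H, ha, fun b hb => (hHsub hb).1, hHinf,
      fun b hb => lt_of_not_ge (hHsub hb).2, ?_⟩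
    intro t t' ht htm ht' htm' ρ
    exact congrFun (hom t t' ht htm ht' htm') ρ
  obtain ⟨a, B, hB0, hmem, hinf, hsub, hgt, hP⟩ :=
    exists_chain (fun a B => ∀ t t' : Fin k' → ℕ, StrictMono t → (∀ l, t l ∈ B) →
      StrictMono t' → (∀ l, t' l ∈ B) →
      ∀ ρ : Fin (k'+1) → Fin (k'+1), auxCol F a t ρ = auxCol F a t' ρ)
      Set.univ Set.infinite_univ step
  have hanti : ∀ {m m'}, m ≤ m' → B m' ⊆ B m := by
    intro m m' h
    induction h with
    | refl => exact le_refl _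
    | step h ih => exact (hsub _).trans ih
  have ha : StrictMono a := strictMono_nat_of_lt_succ fun m => hgt m _ (hmem (m+1))
  set E : Finset ℕ := Finset.image (fun m => a m) (Finset.range p) with hE
  have hcard : E.card = p := by
    rw [hE, Finset.card_image_of_injective _ ha.injective, Finset.card_range]
  -- the covering function
  set g : ((Fin (k'+1) → Fin (k'+1)) × Fin p) → (Fin r → ℕ) :=
    fun q => F (Fin.cons (a q.2) (fun l : Fin k' => a ((q.2 : ℕ) + 1 + l)) ∘ q.1) with hg
  have hcover : regressiveValues F {x | ∀ i, x i ∈ E} ⊆ Set.range g := by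
    rintro y ⟨x, hxE, rfl, hreg⟩
    have hex : ∀ i, ∃ m, m < p ∧ a m = x i := by
      intro i
      have := hxE i
      simp only [hE, Finset.mem_image, Finset.mem_range] at this
      exact this
    choose σ hσp hσa using hex
    obtain ⟨i₀, hi₀⟩ := Finite.exists_min σ
    set j := σ i₀ with hj
    have hjp : j < p := hσp i₀
    have hinfx : ⨅ i, x i = a j := by
      apply le_antisymm
      · exact le_trans (ciInf_le (OrderBot.bddBelow _) i₀) (le_of_eq (hσa i₀).symm)
      · refine le_ciInf fun i => ?_
        rw [← hσa i]
        exact ha.monotone (hi₀ i)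
    -- build the index finset
    set s₀ : Finset ℕ := (Finset.image σ Finset.univ).filter (fun m => j < m) with hs₀
    have hs₀card : s₀.card ≤ k' := by
      have hss : s₀ ⊂ Finset.image σ Finset.univ := by
        refine (Finset.ssubset_iff_of_subset (Finset.filter_subset _ _)).mpr ?_
        exact ⟨j, Finset.mem_image_of_mem σ (Finset.mem_univ i₀), by simp [hs₀]⟩
      have h1 := Finset.card_lt_card hss
      have h2 : (Finset.image σ Finset.univ).card ≤ k' + 1 :=
        le_trans Finset.card_image_le (by simp)
      omega
    have hs₀lt : ∀ m ∈ s₀, m < p := by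
      intro m hm
      rw [hs₀, Finset.mem_filter] at hm
      obtain ⟨hm1, _⟩ := hm
      obtain ⟨i, _, rfl⟩ := Finset.mem_image.mp hm1
      exact hσp i
    set s : Finset ℕ := s₀ ∪ Finset.image (fun l => p + l) (Finset.range (k' - s₀.card))
      with hs
    have hdisj : Disjoint s₀ (Finset.image (fun l => p + l) (Finset.range (k' - s₀.card))) := by
      rw [Finset.disjoint_left]
      intro m hm hm2
      simp only [Finset.mem_image, Finset.mem_range] at hm2
      obtain ⟨l, _, rfl⟩ := hm2
      have := hs₀lt _ hm
      omega
    have hscard : s.card = k' := by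
      rw [hs, Finset.card_union_of_disjoint hdisj,
        Finset.card_image_of_injective _ (add_right_injective p), Finset.card_range]
      omega
    have hsgt : ∀ m ∈ s, j < m := by
      intro m hm
      rw [hs, Finset.mem_union] at hm
      rcases hm with hm | hm
      · exact (Finset.mem_filter.mp hm).2
      · simp only [Finset.mem_image, Finset.mem_range] at hm
        obtain ⟨l, _, rfl⟩ := hm
        omega
    set iso := s.orderIsoOfFin hscard with hiso
    set t : Fin k' → ℕ := fun l => a ((iso l : ℕ)) with ht
    have htmono : StrictMono t := by
      intro l l' h
      exact ha (Subtype.coe_lt_coe.mpr (iso.lt_iff_lt.mpr h))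
    have htm : ∀ l, t l ∈ B (j+1) := by
      intro l
      have h1 : j < (iso l : ℕ) := hsgt _ (iso l).2
      exact hanti (by omega) (hmem _)
    set ct : Fin k' → ℕ := fun l => a (j + 1 + l) with hct
    have hctmono : StrictMono ct := by
      intro l l' h
      exact ha (by omega)
    have hctm : ∀ l, ct l ∈ B (j+1) := fun l => hanti (by omega) (hmem _)
    have hmemσ : ∀ i, σ i ≠ j → σ i ∈ s := by
      intro i h
      rw [hs]
      exact Finset.mem_union_left _ (Finset.mem_filter.mpr
        ⟨Finset.mem_image_of_mem σ (Finset.mem_univ i),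
          lt_of_le_of_ne (hi₀ i) (Ne.symm h)⟩)
    set ρ : Fin (k'+1) → Fin (k'+1) := fun i =>
      if h : σ i = j then 0 else Fin.succ (iso.symm ⟨σ i, hmemσ i h⟩) with hρ
    have hx_eq : Fin.cons (a j) t ∘ ρ = x := by
      funext i
      rw [Function.comp_apply]
      by_cases h : σ i = j
      · have hρi : ρ i = 0 := by simp only [hρ]; exact dif_pos h
        rw [hρi, Fin.cons_zero, ← h, hσa]
      · have hρi : ρ i = Fin.succ (iso.symm ⟨σ i, hmemσ i h⟩) := by
          simp only [hρ]; exact dif_neg h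
        rw [hρi, Fin.cons_succ]
        show a ((iso (iso.symm ⟨σ i, hmemσ i h⟩)) : ℕ) = x i
        rw [OrderIso.apply_symm_apply]
        exact hσa i
    have hcond : (⨆ i, F (Fin.cons (a j) t ∘ ρ) i) < a j := by
      rw [hx_eq, ← hinfx]
      exact hreg
    have hcol : auxCol F (a j) t ρ = auxCol F (a j) ct ρ :=
      hP j t ct htmono htm hctmono hctm ρ
    have hFeq : F (Fin.cons (a j) t ∘ ρ) = F (Fin.cons (a j) ct ∘ ρ) :=
      auxCol_eq hcol hcond
    refine ⟨⟨ρ, ⟨j, hjp⟩⟩, ?_⟩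
    rw [hg]
    rw [← hx_eq, hFeq, hct]
  haveI : Nonempty (Fin p) := ⟨⟨0, hp⟩⟩
  have hfin : (Set.range g).Finite := Set.finite_range g
  refine ⟨E, hcard, hfin.subset hcover, ?_⟩
  have h1 : (Set.range g).ncard ≤ Fintype.card ((Fin (k'+1) → Fin (k'+1)) × Fin p) := by
    rw [← Set.image_univ]
    refine le_trans (Set.ncard_image_le Set.finite_univ) ?_
    rw [Set.ncard_univ, Nat.card_eq_fintype_card]
  have h2 : Fintype.card ((Fin (k'+1) → Fin (k'+1)) × Fin p) = (k'+1) ^ (k'+1) * p := by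
    simp [Fintype.card_fun]
  exact le_trans (le_trans (Set.ncard_le_ncard hcover hfin) h1) (le_of_eq h2)
end

section
/- For all k, r, p > 0 there exists n such that for every function F: [n]^k → [n]^r satisfying |F(x)| ≤ min(x) for all x ∈ [n]^k, there exists a set E ⊆ [n] with |E| = p such that the image F[E^k] has cardinality at most k^k · p. -/
open Classical in
/-- Infinite Ramsey theorem on ℕ. -/
theorem infRamsey {α : Type} [Finite α] [Nonempty α] :
    ∀ (d : ℕ) (χ : Finset ℕ → α) (S : Set ℕ), S.Infinite →
      ∃ H, H ⊆ S ∧ H.Infinite ∧ ∃ v, ∀ A : Finset ℕ, ↑A ⊆ H → A.card = d → χ A = v := by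
  intro d
  induction d with
  | zero =>
    intro χ S hS
    refine ⟨S, subset_rfl, hS, χ ∅, fun A _ hA => ?_⟩
    rw [Finset.card_eq_zero] at hA; rw [hA]
  | succ d IH =>
    intro χ S hS
    have key : ∀ T : Set ℕ, T.Infinite →
        ∃ H, H ⊆ T \ {sInf T} ∧ H.Infinite ∧
          ∃ v, ∀ A : Finset ℕ, ↑A ⊆ H → A.card = d → χ (insert (sInf T) A) = v := by
      intro T hT
      exact IH (fun A => χ (insert (sInf T) A)) (T \ {sInf T})
        (hT.diff (Set.finite_singleton _))
    -- chain of infinite sets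
    let step : {T : Set ℕ // T.Infinite} → {T : Set ℕ // T.Infinite} :=
      fun T => ⟨(key T.1 T.2).choose, (key T.1 T.2).choose_spec.2.1⟩
    let f : ℕ → {T : Set ℕ // T.Infinite} := fun n => step^[n] ⟨S, hS⟩
    have hfs : ∀ n, f (n + 1) = step (f n) := fun n =>
      Function.iterate_succ_apply' step n ⟨S, hS⟩
    set a : ℕ → ℕ := fun n => sInf (f n).1 with ha
    have hspec : ∀ n, (f (n+1)).1 ⊆ (f n).1 \ {a n} ∧
        ∃ v, ∀ A : Finset ℕ, ↑A ⊆ (f (n+1)).1 → A.card = d → χ (insert (a n) A) = v := by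
      intro n
      have h1 : (f (n+1)).1 = (key (f n).1 (f n).2).choose := by rw [hfs n]
      rw [h1]
      exact ⟨(key (f n).1 (f n).2).choose_spec.1, (key (f n).1 (f n).2).choose_spec.2.2⟩
    set col : ℕ → α := fun n => (hspec n).2.choose with hcoldef
    have hcol : ∀ n, ∀ A : Finset ℕ, ↑A ⊆ (f (n+1)).1 → A.card = d →
        χ (insert (a n) A) = col n := fun n => (hspec n).2.choose_spec
    have hmono : ∀ n m, n ≤ m → (f m).1 ⊆ (f n).1 := by
      intro n m h
      induction m with
      | zero => have : n = 0 := by omega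
                rw [this]
      | succ m IH2 =>
        rcases Nat.lt_or_ge n (m+1) with h' | h'
        · exact fun x hx => IH2 (by omega) (((hspec m).1 hx).1)
        · have : n = m + 1 := by omega
          rw [this]
    have hamem : ∀ n, a n ∈ (f n).1 := fun n => Nat.sInf_mem (f n).2.nonempty
    have halt : ∀ n, ∀ x ∈ (f (n+1)).1, a n < x := by
      intro n x hx
      have h1 := (hspec n).1 hx
      have h2 : a n ≤ x := Nat.sInf_le h1.1
      have h3 : x ≠ a n := h1.2
      omega
    have haS : StrictMono a := by
      apply strictMono_nat_of_lt_succ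
      intro n
      exact halt n _ (hamem (n+1))
    -- pigeonhole
    obtain ⟨v, hv⟩ := Finite.exists_infinite_fiber col
    have hv' : (col ⁻¹' {v}).Infinite := Set.infinite_coe_iff.mp hv
    refine ⟨a '' (col ⁻¹' {v}), ?_, hv'.image (haS.injective.injOn), v, ?_⟩
    · rintro x ⟨n, _, rfl⟩
      exact hmono 0 n (Nat.zero_le n) (hamem n)
    · intro A hA hcard
      have hAne : A.Nonempty := Finset.card_pos.mp (by omega)
      obtain ⟨n, hn, hminA⟩ := hA (A.min'_mem hAne)
      have hmemA : a n ∈ A := by rw [hminA]; exact A.min'_mem hAne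
      have herase : ↑(A.erase (a n)) ⊆ (f (n+1)).1 := by
        intro b hb
        rw [Finset.coe_erase, Set.mem_diff] at hb
        obtain ⟨m, hm, rfl⟩ := hA hb.1
        have hne : a m ≠ a n := by simpa using hb.2
        have hge : a n ≤ a m := by
          rw [hminA]; exact A.min'_le _ hb.1
        have : n < m := haS.lt_iff_lt.mp (by omega)
        exact hmono (n+1) m this (hamem m)
      have hcards : (A.erase (a n)).card = d := by
        rw [Finset.card_erase_of_mem hmemA]; omega
      have h2 := hcol n _ herase hcards
      rw [Finset.insert_erase hmemA] at h2
      rw [h2]; exact hn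

open Classical in
theorem minHomog {k r : ℕ} (hk : 0 < k) (F : (Fin k → ℕ) → (Fin r → ℕ))
    (hreg : ∀ x j, F x j ≤ ⨅ i, x i) :
    ∃ e : ℕ → ℕ, StrictMono e ∧
      ∀ (i : ℕ) (B B' : Finset ℕ) (hB : B.card = k) (hB' : B'.card = k),
        ↑B ⊆ Set.range e → ↑B' ⊆ Set.range e →
        (e i ∈ B ∧ ∀ b ∈ B, e i ≤ b) → (e i ∈ B' ∧ ∀ b ∈ B', e i ≤ b) →
        ∀ σ : Fin k → Fin k, (∃ t, (σ t : ℕ) = 0) →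
          F (fun t => B.orderEmbOfFin hB (σ t)) = F (fun t => B'.orderEmbOfFin hB' (σ t)) := by
  -- the coloring at level m
  let Φ : ℕ → Finset ℕ → (Fin k → Fin k) → Fin r → ℕ := fun m A σ j =>
    if h : (insert m A).card = k then
      min (F (fun t => (insert m A).orderEmbOfFin h (σ t)) j) m
    else 0
  let Φ' : (m : ℕ) → Finset ℕ → (Fin k → Fin k) → Fin r → Fin (m+1) := fun m A σ j =>
    ⟨Φ m A σ j, by
      simp only [Φ]
      split
      · exact Nat.lt_succ_of_le (min_le_right _ _)
      · exact Nat.succ_pos m⟩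
  have key : ∀ T : Set ℕ, T.Infinite →
      ∃ H, H ⊆ T \ {sInf T} ∧ H.Infinite ∧
        ∀ A A' : Finset ℕ, ↑A ⊆ H → ↑A' ⊆ H → A.card = k - 1 → A'.card = k - 1 →
          Φ (sInf T) A = Φ (sInf T) A' := by
    intro T hT
    obtain ⟨H, hH1, hH2, v, hv⟩ := infRamsey (α := (Fin k → Fin k) → Fin r → Fin (sInf T + 1))
      (k - 1) (Φ' (sInf T)) (T \ {sInf T}) (hT.diff (Set.finite_singleton _))
    refine ⟨H, hH1, hH2, fun A A' hA hA' hAc hA'c => ?_⟩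
    have h1 := hv A hA hAc
    have h2 := hv A' hA' hA'c
    have : Φ' (sInf T) A = Φ' (sInf T) A' := h1.trans h2.symm
    funext σ j
    have := congrFun (congrFun this σ) j
    exact congrArg Fin.val this
  let step : {T : Set ℕ // T.Infinite} → {T : Set ℕ // T.Infinite} :=
    fun T => ⟨(key T.1 T.2).choose, (key T.1 T.2).choose_spec.2.1⟩
  let f : ℕ → {T : Set ℕ // T.Infinite} := fun n => step^[n] ⟨Set.univ, Set.infinite_univ⟩
  have hfs : ∀ n, f (n + 1) = step (f n) := fun n =>
    Function.iterate_succ_apply' step n _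
  set e : ℕ → ℕ := fun n => sInf (f n).1 with hedef
  have hspec : ∀ n, (f (n+1)).1 ⊆ (f n).1 \ {e n} ∧
      ∀ A A' : Finset ℕ, ↑A ⊆ (f (n+1)).1 → ↑A' ⊆ (f (n+1)).1 →
        A.card = k - 1 → A'.card = k - 1 → Φ (e n) A = Φ (e n) A' := by
    intro n
    have h1 : (f (n+1)).1 = (key (f n).1 (f n).2).choose := by rw [hfs n]
    rw [h1]
    exact ⟨(key (f n).1 (f n).2).choose_spec.1, (key (f n).1 (f n).2).choose_spec.2.2⟩
  have hmono : ∀ n m, n ≤ m → (f m).1 ⊆ (f n).1 := by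
    intro n m h
    induction m with
    | zero => have : n = 0 := by omega
              rw [this]
    | succ m IH2 =>
      rcases Nat.lt_or_ge n (m+1) with h' | h'
      · exact fun x hx => IH2 (by omega) (((hspec m).1 hx).1)
      · have : n = m + 1 := by omega
        rw [this]
  have hamem : ∀ n, e n ∈ (f n).1 := fun n => Nat.sInf_mem (f n).2.nonempty
  have halt : ∀ n, ∀ x ∈ (f (n+1)).1, e n < x := by
    intro n x hx
    have h1 := (hspec n).1 hx
    have h2 : e n ≤ x := Nat.sInf_le h1.1
    have h3 : x ≠ e n := h1.2
    omega
  have heS : StrictMono e := by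
    apply strictMono_nat_of_lt_succ
    intro n
    exact halt n _ (hamem (n+1))
  refine ⟨e, heS, ?_⟩
  intro i B B' hB hB' hBr hB'r hmB hmB' σ hσ
  -- reduction of Φ on B.erase (e i)
  have main : ∀ (C : Finset ℕ) (hC : C.card = k), ↑C ⊆ Set.range e →
      (e i ∈ C ∧ ∀ b ∈ C, e i ≤ b) →
      (↑(C.erase (e i)) ⊆ (f (i+1)).1 ∧ (C.erase (e i)).card = k - 1 ∧
        ∀ j, Φ (e i) (C.erase (e i)) σ j = F (fun t => C.orderEmbOfFin hC (σ t)) j) := by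
    intro C hC hCr hmC
    have hsub : ↑(C.erase (e i)) ⊆ (f (i+1)).1 := by
      intro b hb
      rw [Finset.coe_erase, Set.mem_diff] at hb
      obtain ⟨j, rfl⟩ := hCr hb.1
      have hne : e j ≠ e i := by simpa using hb.2
      have hge : e i ≤ e j := hmC.2 _ hb.1
      have hij : i < j := heS.lt_iff_lt.mp (by omega)
      exact hmono (i+1) j hij (hamem j)
    have hcard : (C.erase (e i)).card = k - 1 := by
      rw [Finset.card_erase_of_mem hmC.1, hC]
    refine ⟨hsub, hcard, fun j => ?_⟩
    have hins : insert (e i) (C.erase (e i)) = C := Finset.insert_erase hmC.1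
    have hle : F (fun t => C.orderEmbOfFin hC (σ t)) j ≤ e i := by
      obtain ⟨t0, ht0⟩ := hσ
      have hσ0 : σ t0 = ⟨0, hk⟩ := Fin.ext (by simpa using ht0)
      have hminC : C.min' (Finset.card_pos.mp (by omega)) = e i := by
        apply le_antisymm
        · exact Finset.min'_le _ _ hmC.1
        · exact hmC.2 _ (Finset.min'_mem _ _)
      have hval : C.orderEmbOfFin hC (σ t0) = e i := by
        rw [hσ0, Finset.orderEmbOfFin_zero hC hk, hminC]
      calc F (fun t => C.orderEmbOfFin hC (σ t)) j ≤ ⨅ t, C.orderEmbOfFin hC (σ t) :=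
            hreg _ j
        _ ≤ C.orderEmbOfFin hC (σ t0) := ciInf_le (OrderBot.bddBelow _) t0
        _ = e i := hval
    simp only [Φ, hins]
    rw [dif_pos hC]
    exact min_eq_left hle
  obtain ⟨hsB, hcB, hvB⟩ := main B hB hBr hmB
  obtain ⟨hsB', hcB', hvB'⟩ := main B' hB' hB'r hmB'
  have hΦ := (hspec i).2 _ _ hsB hsB' hcB hcB'
  funext j
  rw [← hvB j, ← hvB' j, hΦ]

theorem countLemma {k r p : ℕ} (hk : 0 < k) (hp : 0 < p)
    (F : (Fin k → ℕ) → (Fin r → ℕ)) (hreg : ∀ x j, F x j ≤ ⨅ i, x i) :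
    ∃ E : Finset ℕ, E.card = p ∧
      (F '' {x : Fin k → ℕ | ∀ i, x i ∈ E}).Finite ∧
      (F '' {x : Fin k → ℕ | ∀ i, x i ∈ E}).ncard ≤ k ^ k * p := by
  obtain ⟨e, heS, hmain⟩ := minHomog hk F hreg
  set E : Finset ℕ := (Finset.range p).image e with hEdef
  have hEcard : E.card = p := by
    rw [hEdef, Finset.card_image_of_injective _ heS.injective, Finset.card_range]
  set Sp : Finset ℕ := (Finset.Ico p (p + (k-1))).image e with hSpdef
  have hSpcard : Sp.card = k - 1 := by
    rw [hSpdef, Finset.card_image_of_injective _ heS.injective, Nat.card_Ico]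
    omega
  have hSpmem : ∀ b ∈ Sp, ∃ j, p ≤ j ∧ e j = b := by
    intro b hb
    rw [hSpdef, Finset.mem_image] at hb
    obtain ⟨j, hj, rfl⟩ := hb
    exact ⟨j, (Finset.mem_Ico.mp hj).1, rfl⟩
  have hcard : ∀ i : Fin p, (insert (e ↑i) Sp).card = k := by
    intro i
    have hni : e ↑i ∉ Sp := by
      intro h
      obtain ⟨j, hj, hej⟩ := hSpmem _ h
      have := heS.injective hej
      omega
    rw [Finset.card_insert_of_notMem hni, hSpcard]
    omega
  set Z : ((Fin k → Fin k) × Fin p) → Fin r → ℕ :=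
    fun q => F (fun t => (insert (e ↑q.2) Sp).orderEmbOfFin (hcard q.2) (q.1 t)) with hZdef
  have hsub : F '' {x : Fin k → ℕ | ∀ i, x i ∈ E} ⊆ Set.range Z := by
    rintro _ ⟨x, hx, rfl⟩
    simp only [Set.mem_setOf_eq] at hx
    set Vals : Finset ℕ := Finset.image x Finset.univ with hVdef
    have hVne : Vals.Nonempty := ⟨x ⟨0, hk⟩, by simp [hVdef]⟩
    set m : ℕ := Vals.min' hVne with hmdef
    have hmVals : m ∈ Vals := Vals.min'_mem hVne
    have hmE : m ∈ E := by
      rw [hVdef, Finset.mem_image] at hmVals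
      obtain ⟨t, _, ht⟩ := hmVals
      rw [← ht]; exact hx t
    obtain ⟨i, hip, hei⟩ : ∃ i, i < p ∧ e i = m := by
      rw [hEdef, Finset.mem_image] at hmE
      obtain ⟨i, hi, hei⟩ := hmE
      exact ⟨i, Finset.mem_range.mp hi, hei⟩
    have hminx : ∀ t, m ≤ x t := fun t => Vals.min'_le _ (by simp [hVdef])
    -- build B ⊇ Vals of card k
    have hVc : Vals.card ≤ k := Finset.card_image_le.trans (by simp)
    have hmSp : m ∉ Sp := by
      intro h
      obtain ⟨j, hj, hej⟩ := hSpmem _ h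
      rw [← hei] at hej
      have := heS.injective hej
      omega
    have htc : k ≤ (Vals ∪ Sp).card := by
      have h1 : insert m Sp ⊆ Vals ∪ Sp := by
        intro b hb
        rcases Finset.mem_insert.mp hb with rfl | hb
        · exact Finset.mem_union_left _ hmVals
        · exact Finset.mem_union_right _ hb
      calc k = (insert m Sp).card := by
              rw [Finset.card_insert_of_notMem hmSp, hSpcard]; omega
        _ ≤ (Vals ∪ Sp).card := Finset.card_le_card h1
    obtain ⟨B, hVB, hBsub, hBk⟩ :=
      Finset.exists_subsuperset_card_eq Finset.subset_union_left hVc htc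
    have hBr : ↑B ⊆ Set.range e := by
      intro b hb
      rcases Finset.mem_union.mp (hBsub hb) with hb' | hb'
      · rw [hVdef, Finset.mem_image] at hb'
        obtain ⟨t, _, rfl⟩ := hb'
        have := hx t
        rw [hEdef, Finset.mem_image] at this
        obtain ⟨i', _, h⟩ := this
        exact ⟨i', h⟩
      · obtain ⟨j, _, h⟩ := hSpmem _ hb'
        exact ⟨j, h⟩
    have hmB : e i ∈ B ∧ ∀ b ∈ B, e i ≤ b := by
      constructor
      · rw [hei]; exact hVB hmVals
      · intro b hb
        rcases Finset.mem_union.mp (hBsub hb) with hb' | hb'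
        · rw [hVdef, Finset.mem_image] at hb'
          obtain ⟨t, _, rfl⟩ := hb'
          rw [hei]; exact hminx t
        · obtain ⟨j, hj, rfl⟩ := hSpmem _ hb'
          exact le_of_lt (heS (by omega))
    have hxB : ∀ t, x t ∈ B := fun t => hVB (by simp [hVdef])
    set σ : Fin k → Fin k := fun t => (B.orderIsoOfFin hBk).symm ⟨x t, hxB t⟩ with hσdef
    have hemb : ∀ t, B.orderEmbOfFin hBk (σ t) = x t := by
      intro t
      rw [hσdef, ← Finset.coe_orderIsoOfFin_apply, OrderIso.apply_symm_apply]
    have hminB : B.min' (Finset.card_pos.mp (by omega)) = e i := by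
      apply le_antisymm
      · exact Finset.min'_le _ _ hmB.1
      · exact hmB.2 _ (Finset.min'_mem _ _)
    have hσ0 : ∃ t, (σ t : ℕ) = 0 := by
      have : m ∈ Vals := hmVals
      rw [hVdef, Finset.mem_image] at this
      obtain ⟨t0, _, ht0⟩ := this
      refine ⟨t0, ?_⟩
      have h1 : B.orderEmbOfFin hBk (σ t0) = x t0 := hemb t0
      have h2 : B.orderEmbOfFin hBk ⟨0, hk⟩ = e i := by
        rw [Finset.orderEmbOfFin_zero hBk hk, hminB]
      have h3 : σ t0 = ⟨0, hk⟩ := by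
        apply (B.orderEmbOfFin hBk).injective
        rw [h1, h2, ht0, hei]
      rw [h3]
    -- conditions for the canonical set
    have hmC : e i ∈ insert (e i) Sp ∧ ∀ b ∈ insert (e i) Sp, e i ≤ b := by
      refine ⟨Finset.mem_insert_self _ _, fun b hb => ?_⟩
      rcases Finset.mem_insert.mp hb with rfl | hb
      · exact le_rfl
      · obtain ⟨j, hj, rfl⟩ := hSpmem _ hb
        exact le_of_lt (heS (by omega))
    have hCr : ↑(insert (e i) Sp) ⊆ Set.range e := by
      intro b hb
      rcases Finset.mem_insert.mp (by exact_mod_cast hb) with rfl | hb'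
      · exact ⟨i, rfl⟩
      · obtain ⟨j, _, h⟩ := hSpmem _ hb'
        exact ⟨j, h⟩
    refine ⟨⟨σ, ⟨i, hip⟩⟩, ?_⟩
    rw [hZdef]
    have := hmain i (insert (e i) Sp) B (hcard ⟨i, hip⟩) hBk hCr hBr hmC hmB σ hσ0
    simp only
    rw [this]
    exact congrArg F (funext fun t => hemb t)
  have hfin : (Set.range Z).Finite := Set.finite_range Z
  refine ⟨E, hEcard, hfin.subset hsub, ?_⟩
  calc (F '' {x : Fin k → ℕ | ∀ i, x i ∈ E}).ncard ≤ (Set.range Z).ncard :=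
        Set.ncard_le_ncard hsub hfin
    _ ≤ Nat.card ((Fin k → Fin k) × Fin p) := by
        rw [← Set.image_univ]
        exact (Set.ncard_image_le Set.finite_univ).trans (le_of_eq (Set.ncard_univ _))
    _ = k ^ k * p := by
        simp [Nat.card_eq_fintype_card]


/-- Theorem 0.3 (finite form of Theorem 0.1). -/
theorem stmt_2 (k r p : ℕ) (hk : 0 < k) (hr : 0 < r) (hp : 0 < p) :
    ∃ n : ℕ, ∀ F : (Fin k → ℕ) → (Fin r → ℕ),
      (∀ x : Fin k → ℕ, (∀ i, x i < n) → ∀ j, F x j < n) →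
      (∀ x : Fin k → ℕ, (∀ i, x i < n) → (⨆ j, F x j) ≤ ⨅ i, x i) →
      ∃ E : Finset ℕ, E ⊆ Finset.range n ∧ E.card = p ∧
        (F '' {x : Fin k → ℕ | ∀ i, x i ∈ E}).Finite ∧
        (F '' {x : Fin k → ℕ | ∀ i, x i ∈ E}).ncard ≤ k ^ k * p := by
  by_contra hcon
  push_neg at hcon
  choose F₀ h1 h2 hbad using hcon
  clear h1
  set G : ℕ → (Fin k → ℕ) → Fin r → ℕ :=
    fun n x => if h : ∀ i, x i < n then F₀ n x else fun _ => 0 with hGdef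
  have hGreg : ∀ n x j, G n x j ≤ ⨅ i, x i := by
    intro n x j
    simp only [hGdef]
    split
    · rename_i hlt
      calc F₀ n x j ≤ ⨆ j', F₀ n x j' := le_ciSup (Set.finite_range _).bddAbove j
        _ ≤ ⨅ i, x i := h2 n x hlt
    · exact Nat.zero_le _
  set U : Ultrafilter ℕ := Filter.hyperfilter ℕ with hUdef
  have hlim : ∀ (x : Fin k → ℕ) (j : Fin r), ∃ v, {n | G n x j = v} ∈ U := by
    intro x j
    have hunion : (⋃ v ∈ Set.Iic (⨅ i, x i), {n | G n x j = v}) = Set.univ := by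
      ext n
      simp only [Set.mem_iUnion, Set.mem_setOf_eq, Set.mem_univ, iff_true, Set.mem_Iic]
      exact ⟨G n x j, hGreg n x j, rfl⟩
    have hU : (⋃ v ∈ Set.Iic (⨅ i, x i), {n | G n x j = v}) ∈ U := by
      rw [hunion]; exact Filter.univ_mem
    obtain ⟨v, _, hv⟩ := (Ultrafilter.finite_biUnion_mem_iff (Set.finite_Iic _)).mp hU
    exact ⟨v, hv⟩
  set F : (Fin k → ℕ) → Fin r → ℕ := fun x j => (hlim x j).choose with hFdef
  have hF : ∀ x j, {n | G n x j = F x j} ∈ U := fun x j => (hlim x j).choose_spec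
  have hFreg : ∀ x j, F x j ≤ ⨅ i, x i := by
    intro x j
    obtain ⟨n, hn⟩ := Filter.nonempty_of_mem (hF x j)
    rw [Set.mem_setOf_eq] at hn
    rw [← hn]
    exact hGreg n x j
  obtain ⟨E, hEcard, hEfin, hEncard⟩ := countLemma (r := r) hk hp F hFreg
  set T : Set (Fin k → ℕ) := {x | ∀ i, x i ∈ E} with hTdef
  have hT : T.Finite := by
    have : T = Set.pi Set.univ (fun _ : Fin k => (↑E : Set ℕ)) := by
      ext x; simp [hTdef, Set.mem_pi]
    rw [this]
    exact Set.Finite.pi (fun _ => E.finite_toSet)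
  have hW : {n | ∀ x ∈ T, ∀ j, G n x j = F x j} ∈ U := by
    have heq : {n | ∀ x ∈ T, ∀ j, G n x j = F x j}
        = ⋂ x ∈ T, ⋂ j, {n | G n x j = F x j} := by
      ext n; simp
    rw [heq]
    exact (Filter.biInter_mem hT).mpr fun x _ => Filter.iInter_mem.mpr fun j => hF x j
  have hbig : {n | ∀ b ∈ E, b < n} ∈ U := by
    apply Filter.mem_hyperfilter_of_finite_compl
    apply Set.Finite.subset (Set.finite_Iic (E.sup id))
    intro n hn
    simp only [Set.mem_compl_iff, Set.mem_setOf_eq, not_forall] at hn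
    obtain ⟨b, hb, hnb⟩ := hn
    exact Set.mem_Iic.mpr (le_trans (not_lt.mp hnb) (Finset.le_sup (f := id) hb))
  obtain ⟨n, hnW, hnbig⟩ := Filter.nonempty_of_mem (Filter.inter_mem hW hbig)
  have hErange : E ⊆ Finset.range n := fun b hb => Finset.mem_range.mpr (hnbig b hb)
  have himage : F₀ n '' T = F '' T := by
    apply Set.image_congr
    intro x hx
    funext j
    have hxlt : ∀ i, x i < n := fun i => hnbig _ (hx i)
    have h3 : G n x j = F₀ n x j := by simp only [hGdef, dif_pos hxlt]
    rw [← h3]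
    exact hnW x hx j
  have hfin2 : (F₀ n '' T).Finite := by rw [himage]; exact hEfin
  have := hbad n E hErange hEcard hfin2
  rw [himage] at this
  omega
end

section
/- For all k, r, p > 0 there exists n such that for every function F: [n]^k → [n]^r there exists a set E ⊆ [n] with |E| = p such that F has at most k^k · p regressive values on E^k. -/
section Aux
variable {k r : ℕ}

/-- regressivity of `F` at `x` -/
def RegT (F : (Fin k → ℕ) → (Fin r → ℕ)) (x : Fin k → ℕ) : Prop :=
  (⨆ j, F x j) < ⨅ i, x i

/-- rank of coordinate `i` among the values of `x` -/
def rkT (x : Fin k → ℕ) (i : Fin k) : ℕ :=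
  ((Finset.image x Finset.univ).filter (· < x i)).card

lemma inf_mem (hk : 0 < k) (x : Fin k → ℕ) : (⨅ i, x i) ∈ Finset.image x Finset.univ := by
  haveI : Nonempty (Fin k) := ⟨⟨0, hk⟩⟩
  obtain ⟨i0, _, hi0⟩ := Finset.exists_min_image Finset.univ x ⟨⟨0, hk⟩, Finset.mem_univ _⟩
  have h1 : (⨅ i, x i) = x i0 := le_antisymm (ciInf_le (OrderBot.bddBelow _) i0)
    (le_ciInf fun j => hi0 j (Finset.mem_univ j))
  rw [h1]
  exact Finset.mem_image_of_mem x (Finset.mem_univ i0)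

lemma inf_le' (x : Fin k → ℕ) (i : Fin k) : (⨅ i, x i) ≤ x i :=
  ciInf_le (OrderBot.bddBelow _) i

lemma le_sup' (F : (Fin k → ℕ) → (Fin r → ℕ)) (x : Fin k → ℕ) (j : Fin r) :
    F x j ≤ ⨆ j, F x j :=
  le_ciSup (Set.Finite.bddAbove (Set.finite_range _)) j

lemma rkT_lt (hk : 0 < k) (x : Fin k → ℕ) (i : Fin k) : rkT x i < k := by
  have h1 : (Finset.image x Finset.univ).filter (· < x i) ⊂ Finset.image x Finset.univ := by
    refine Finset.ssubset_iff_of_subset (Finset.filter_subset _ _) |>.mpr ?_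
    exact ⟨x i, Finset.mem_image_of_mem x (Finset.mem_univ i), by simp⟩
  calc rkT x i < (Finset.image x Finset.univ).card := Finset.card_lt_card h1
    _ ≤ k := le_trans (Finset.card_image_le) (by simp)

end Aux

theorem inf_ramsey {γ : Type} [Finite γ] : ∀ (d : ℕ) (A : Set ℕ), A.Infinite →
    ∀ χ : Finset ℕ → γ, ∃ B, B ⊆ A ∧ B.Infinite ∧ ∃ c, ∀ T : Finset ℕ,
      ↑T ⊆ B → T.card = d → χ T = c := by
  intro d
  induction d with
  | zero =>
    intro A hA χ
    exact ⟨A, le_refl _, hA, χ ∅, fun T _ hT => by rw [Finset.card_eq_zero.mp hT]⟩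
  | succ d ih =>
    intro A hA χ
    have key : ∀ A' : {S : Set ℕ // S.Infinite}, ∃ (B : {S : Set ℕ // S.Infinite}) (c : γ),
        B.1 ⊆ A'.1 ∧ (∀ b ∈ B.1, sInf A'.1 < b) ∧
        ∀ T : Finset ℕ, ↑T ⊆ B.1 → T.card = d → χ (insert (sInf A'.1) T) = c := by
      rintro ⟨A', hA'⟩
      have hsub : A' ∩ Set.Ioi (sInf A') = A' \ {sInf A'} := by
        ext a
        simp only [Set.mem_inter_iff, Set.mem_Ioi, Set.mem_diff, Set.mem_singleton_iff]
        constructor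
        · rintro ⟨h1, h2⟩; exact ⟨h1, Nat.ne_of_gt h2⟩
        · rintro ⟨h1, h2⟩; exact ⟨h1, lt_of_le_of_ne (Nat.sInf_le h1) (Ne.symm h2)⟩
      have hinf : (A' ∩ Set.Ioi (sInf A')).Infinite := by
        rw [hsub]; exact hA'.diff (Set.finite_singleton _)
      obtain ⟨B, hB1, hB2, c, hc⟩ := ih (A' ∩ Set.Ioi (sInf A')) hinf
        (fun T => χ (insert (sInf A') T))
      exact ⟨⟨B, hB2⟩, c, hB1.trans Set.inter_subset_left,
        fun b hb => (hB1 hb).2, hc⟩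
    choose step c hsub hgt hhom using key
    set Seq : ℕ → {S : Set ℕ // S.Infinite} := fun m => step^[m] ⟨A, hA⟩ with hSeq
    have hSeqSucc : ∀ m, Seq (m + 1) = step (Seq m) := fun m =>
      Function.iterate_succ_apply' step m _
    have hmono : ∀ i j, i ≤ j → (Seq j).1 ⊆ (Seq i).1 := by
      intro i j hij
      induction j with
      | zero => cases Nat.le_zero.mp hij; exact le_refl _
      | succ j ihj =>
        rcases Nat.lt_or_ge i (j+1) with h | h
        · exact ((hSeqSucc j ▸ hsub (Seq j)) : (Seq (j+1)).1 ⊆ (Seq j).1).trans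
            (ihj (Nat.lt_succ_iff.mp h))
        · have : i = j + 1 := le_antisymm hij h
          subst this; exact le_refl _
    set a : ℕ → ℕ := fun m => sInf (Seq m).1 with ha
    have hamem : ∀ m, a m ∈ (Seq m).1 := fun m => Nat.sInf_mem (Seq m).2.nonempty
    have hagt : ∀ m, ∀ b ∈ (Seq (m+1)).1, a m < b := by
      intro m b hb
      exact hgt (Seq m) b (by rwa [← hSeqSucc m])
    have haS : StrictMono a := by
      apply strictMono_nat_of_lt_succ
      intro m
      exact hagt m _ (hamem (m+1))
    have hhom' : ∀ m, ∀ T : Finset ℕ, ↑T ⊆ (Seq (m+1)).1 → T.card = d →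
        χ (insert (a m) T) = c (Seq m) := by
      intro m T hT hTc
      exact hhom (Seq m) T (by rwa [← hSeqSucc m]) hTc
    obtain ⟨c0, hc0⟩ := Finite.exists_infinite_fiber (fun m => c (Seq m))
    have hI : ((fun m => c (Seq m)) ⁻¹' {c0}).Infinite := Set.infinite_coe_iff.mp hc0
    refine ⟨a '' ((fun m => c (Seq m)) ⁻¹' {c0}), ?_, hI.image (haS.injective.injOn), c0, ?_⟩
    · rintro x ⟨m, _, rfl⟩
      exact hmono 0 m (Nat.zero_le m) (hamem m)
    · intro T hT hTc
      have hTne : T.Nonempty := Finset.card_pos.mp (by omega)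
      obtain ⟨i0, hi0I, hi0⟩ := hT (T.min'_mem hTne)
      have herase : ↑(T.erase (T.min' hTne)) ⊆ (Seq (i0+1)).1 := by
        intro t ht
        rw [Finset.coe_erase] at ht
        obtain ⟨htT, htne⟩ := ht
        obtain ⟨j, _, hj⟩ := hT htT
        have htgt : T.min' hTne < t := lt_of_le_of_ne (T.min'_le t htT) (Ne.symm htne)
        have : i0 < j := by
          rw [← haS.lt_iff_lt]; rw [hi0, hj]; exact htgt
        rw [← hj]
        exact hmono (i0+1) j this (hamem j)
      have h2 : χ (insert (a i0) (T.erase (a i0))) = c (Seq i0) :=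
        hhom' i0 _ (by rw [hi0]; exact herase)
          (by rw [hi0, Finset.card_erase_of_mem (T.min'_mem hTne), hTc]; omega)
      rw [hi0, Finset.insert_erase (T.min'_mem hTne)] at h2
      rw [h2]; exact hi0I
theorem rank_lemma (S : Finset ℕ) {m : ℕ} (h : S.card = m) {a : ℕ} (ha : a ∈ S)
    (hlt : (S.filter (· < a)).card < m) :
    ↑(S.orderIsoOfFin h ⟨(S.filter (· < a)).card, hlt⟩) = a := by
  set f := S.orderIsoOfFin h with hf
  set j := f.symm ⟨a, ha⟩ with hj
  have hfj : f j = ⟨a, ha⟩ := f.apply_symm_apply _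
  have hcard : S.filter (· < a) =
      Finset.image (fun i : Fin m => (f i : ℕ)) (Finset.univ.filter (fun i => i < j)) := by
    ext b
    simp only [Finset.mem_filter, Finset.mem_image, Finset.mem_univ, true_and]
    constructor
    · rintro ⟨hbS, hba⟩
      refine ⟨f.symm ⟨b, hbS⟩, ?_, by rw [f.apply_symm_apply]⟩
      rw [← f.lt_iff_lt, f.apply_symm_apply, hfj]
      exact hba
    · rintro ⟨i, hij, rfl⟩
      refine ⟨(f i).2, ?_⟩
      have := f.lt_iff_lt.mpr hij
      rw [hfj] at this
      exact this
  have hcard2 : (S.filter (· < a)).card = (j : ℕ) := by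
    rw [hcard, Finset.card_image_of_injective _
      (show Function.Injective (fun i : Fin m => (f i : ℕ)) from
        fun i1 i2 hi => f.injective (Subtype.val_injective hi))]
    have : Finset.univ.filter (fun i : Fin m => i < j) = Finset.Iio j := by
      ext i; simp
    rw [this, Fin.card_Iio]
  have : (⟨(S.filter (· < a)).card, hlt⟩ : Fin m) = j := Fin.ext hcard2
  rw [this, hfj]
open Classical in
theorem homog {k r : ℕ} (hk : 0 < k) (hr : 0 < r) (F : (Fin k → ℕ) → (Fin r → ℕ))
    (e : ℕ) (Bk : Set ℕ) (h1 : Bk.Infinite) (hBk : ∀ b ∈ Bk, e < b) :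
    ∃ B', B' ⊆ Bk ∧ B'.Infinite ∧ ∀ x x' : Fin k → ℕ,
      (∀ i, x i = e ∨ x i ∈ B') → (∀ i, x' i = e ∨ x' i ∈ B') →
      (⨅ i, x i) = e → (⨅ i, x' i) = e → (∀ i, rkT x i = rkT x' i) →
      RegT F x → RegT F x' → F x = F x' := by
  haveI : Nonempty (Fin k) := ⟨⟨0, hk⟩⟩
  set χ : Finset ℕ → ((Fin k → Fin k) → Option (Fin r → Fin e)) := fun T =>
    if h : (insert e T).card = k then
      fun τ =>
        if hreg : (⨆ j, F (fun i => ((insert e T).orderIsoOfFin h (τ i) : ℕ)) j) < e then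
          some (fun j => ⟨F (fun i => ((insert e T).orderIsoOfFin h (τ i) : ℕ)) j,
            lt_of_le_of_lt (le_sup' F _ j) hreg⟩)
        else none
    else fun _ => none with hχ
  obtain ⟨B', hB'sub, hB'inf, c, hc⟩ := inf_ramsey (k - 1) Bk h1 χ
  refine ⟨B', hB'sub, hB'inf, ?_⟩
  have hpf : ∀ (x : Fin k → ℕ), (⨅ i, x i) = e → RegT F x → ∀ j, F x j < e := by
    intro x hmin hreg j
    calc F x j ≤ ⨆ j, F x j := le_sup' F x j
      _ < ⨅ i, x i := hreg
      _ = e := hmin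
  -- key evaluation
  have key : ∀ (x : Fin k → ℕ), (∀ i, x i = e ∨ x i ∈ B') →
      ∀ (hmin : (⨅ i, x i) = e) (hreg : RegT F x),
      c (fun i => (⟨rkT x i, rkT_lt hk x i⟩ : Fin k)) =
        some (fun j => ⟨F x j, hpf x hmin hreg j⟩) := by
    intro x hx hmin hreg
    set vx := Finset.image x Finset.univ with hvx
    have hvx_ne : vx.Nonempty := ⟨x ⟨0, hk⟩, Finset.mem_image_of_mem x (Finset.mem_univ _)⟩
    have hevx : e ∈ vx := hmin ▸ inf_mem hk x
    set V := vx.erase e with hV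
    have hVsub : ↑V ⊆ B' := by
      intro v hv
      rw [hV] at hv
      simp only [Finset.coe_erase, Set.mem_diff, Finset.mem_coe, Set.mem_singleton_iff] at hv
      obtain ⟨hv1, hv2⟩ := hv
      obtain ⟨i, _, rfl⟩ := Finset.mem_image.mp hv1
      rcases hx i with h | h
      · exact absurd h hv2
      · exact h
    have hvcard : vx.card ≤ k := le_trans (Finset.card_image_le) (by simp)
    have hVcard : V.card ≤ k - 1 := by
      rw [hV, Finset.card_erase_of_mem hevx]; omega
    set N := vx.max' hvx_ne with hN
    have hxN : ∀ i, x i ≤ N := fun i =>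
      Finset.le_max' vx (x i) (Finset.mem_image_of_mem x (Finset.mem_univ i))
    have hBN : (B' ∩ Set.Ioi N).Infinite := by
      have : B' ∩ Set.Ioi N = B' \ Set.Iic N := by
        ext b; simp only [Set.mem_inter_iff, Set.mem_Ioi, Set.mem_diff, Set.mem_Iic]
        constructor <;> rintro ⟨hq1, hq2⟩ <;> exact ⟨hq1, by omega⟩
      rw [this]; exact hB'inf.diff (Set.finite_Iic N)
    obtain ⟨Ex, hEx1, hEx2⟩ := hBN.exists_subset_card_eq (k - 1 - V.card)
    set T := V ∪ Ex with hT
    have hdisj : Disjoint V Ex := by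
      rw [Finset.disjoint_left]
      intro v hvV hvEx
      have h1 : v ≤ N := Finset.le_max' vx v (Finset.mem_of_mem_erase (hV ▸ hvV))
      have h2 : N < v := (hEx1 hvEx).2
      omega
    have hTcard : T.card = k - 1 := by
      rw [hT, Finset.card_union_of_disjoint hdisj, hEx2]; omega
    have hTsub : ↑T ⊆ B' := by
      intro t ht
      rw [hT] at ht
      rcases Finset.mem_union.mp ht with h | h
      · exact hVsub h
      · exact (hEx1 h).1
    have heT : e ∉ T := by
      intro h
      exact absurd (hBk _ (hB'sub (hTsub h))) (lt_irrefl e)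
    have hSk : (insert e T).card = k := by
      rw [Finset.card_insert_of_notMem heT, hTcard]; omega
    -- the canonical tuple equals x
    have hvxV : vx = insert e V := (Finset.insert_erase hevx).symm
    have htup : (fun i => ((insert e T).orderIsoOfFin hSk
        ((fun i => (⟨rkT x i, rkT_lt hk x i⟩ : Fin k)) i) : ℕ)) = x := by
      funext i
      have hxiS : x i ∈ insert e T := by
        have : x i ∈ vx := Finset.mem_image_of_mem x (Finset.mem_univ i)
        rw [hvxV] at this
        rcases Finset.mem_insert.mp this with h | h
        · exact Finset.mem_insert.mpr (Or.inl h)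
        · exact Finset.mem_insert.mpr (Or.inr (Finset.mem_union_left _ h))
      have hfilter : (insert e T).filter (· < x i) = vx.filter (· < x i) := by
        ext b
        simp only [Finset.mem_filter, Finset.mem_insert, hT, Finset.mem_union]
        constructor
        · rintro ⟨h | h | h, hb⟩
          · exact ⟨h ▸ hevx, hb⟩
          · exact ⟨hvxV ▸ Finset.mem_insert.mpr (Or.inr h), hb⟩
          · exfalso
            have : N < b := (hEx1 h).2
            have : b < x i := hb
            have := hxN i
            omega
        · rintro ⟨hb1, hb2⟩
          rw [hvxV] at hb1
          rcases Finset.mem_insert.mp hb1 with h | h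
          · exact ⟨Or.inl h, hb2⟩
          · exact ⟨Or.inr (Or.inl h), hb2⟩
      have hfc : ((insert e T).filter (· < x i)).card = rkT x i := by
        rw [hfilter]; rfl
      have hfin : ((⟨rkT x i, rkT_lt hk x i⟩ : Fin k)) =
          ⟨((insert e T).filter (· < x i)).card, hfc ▸ rkT_lt hk x i⟩ := Fin.ext hfc.symm
      beta_reduce
      rw [hfin]
      exact rank_lemma (insert e T) hSk hxiS _
    have hχT : χ T = c := hc T hTsub hTcard
    rw [← hχT, hχ]
    simp only [dif_pos hSk]
    rw [htup]  -- hope this rewrites under the dite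
    have hregE : (⨆ j, F x j) < e := hmin ▸ hreg
    rw [dif_pos hregE]
  -- conclude
  intro x x' hx hx' hmx hmx' hrk hregx hregx'
  have hpat : (fun i => (⟨rkT x i, rkT_lt hk x i⟩ : Fin k)) =
      (fun i => (⟨rkT x' i, rkT_lt hk x' i⟩ : Fin k)) := by
    funext i; exact Fin.ext (hrk i)
  have h1 := key x hx hmx hregx
  have h2 := key x' hx' hmx' hregx'
  rw [hpat] at h1
  rw [h1] at h2
  have h3 := Option.some.inj h2
  funext j
  have h4 := congrFun h3 j
  exact (Fin.mk.injEq _ _ _ _).mp h4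

/-- min-homogeneity property of `F` on tuples from `E ∪ B` with min in `E` -/
def GoodT {k r : ℕ} (F : (Fin k → ℕ) → (Fin r → ℕ)) (E : Finset ℕ) (B : Set ℕ) : Prop :=
  ∀ x x' : Fin k → ℕ, (∀ i, x i ∈ ↑E ∪ B) → (∀ i, x' i ∈ ↑E ∪ B) →
    (⨅ i, x i) ∈ E → (⨅ i, x i) = (⨅ i, x' i) → (∀ i, rkT x i = rkT x' i) →
    RegT F x → RegT F x' → F x = F x'

theorem recE {k r : ℕ} (hk : 0 < k) (hr : 0 < r) (F : (Fin k → ℕ) → (Fin r → ℕ)) :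
    ∀ (p : ℕ) (A : Set ℕ), A.Infinite → ∃ (E : Finset ℕ) (B : Set ℕ),
      ↑E ⊆ A ∧ E.card = p ∧ B ⊆ A ∧ B.Infinite ∧ (∀ a ∈ E, ∀ b ∈ B, a < b) ∧
      GoodT F E B := by
  intro p
  induction p with
  | zero =>
    intro A hA
    exact ⟨∅, A, by simp, rfl, le_refl _, hA, by simp, fun x x' _ _ hmem => by
      simp at hmem⟩
  | succ p ih =>
    intro A hA
    obtain ⟨E, B, hEA, hEc, hBA, hBinf, hEB, hGood⟩ := ih A hA
    set e := sInf B with he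
    have heB : e ∈ B := Nat.sInf_mem hBinf.nonempty
    have hBk : (B ∩ Set.Ioi e).Infinite := by
      have : B ∩ Set.Ioi e = B \ {e} := by
        ext b
        simp only [Set.mem_inter_iff, Set.mem_Ioi, Set.mem_diff, Set.mem_singleton_iff]
        constructor
        · rintro ⟨hb1, hb2⟩; exact ⟨hb1, Nat.ne_of_gt hb2⟩
        · rintro ⟨hb1, hb2⟩; exact ⟨hb1, lt_of_le_of_ne (Nat.sInf_le hb1) (Ne.symm hb2)⟩
      rw [this]; exact hBinf.diff (Set.finite_singleton _)
    have hBkgt : ∀ b ∈ B ∩ Set.Ioi e, e < b := fun b hb => hb.2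
    obtain ⟨B', hB'sub, hB'inf, hB'key⟩ := homog hk hr F e (B ∩ Set.Ioi e) hBk hBkgt
    have hB'B : B' ⊆ B := hB'sub.trans Set.inter_subset_left
    have hB'gt : ∀ b ∈ B', e < b := fun b hb => (hB'sub hb).2
    have heE : e ∉ E := fun h => lt_irrefl e (hEB e h e heB)
    refine ⟨insert e E, B', ?_, ?_, hB'B.trans hBA, hB'inf, ?_, ?_⟩
    · rw [Finset.coe_insert]
      exact Set.insert_subset (hBA heB) hEA
    · rw [Finset.card_insert_of_notMem heE, hEc]
    · intro a ha b hb
      rcases Finset.mem_insert.mp ha with rfl | ha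
      · exact hB'gt b hb
      · exact hEB a ha b (hB'B hb)
    · intro x x' hx hx' hmem hmeq hrk hregx hregx'
      rcases Finset.mem_insert.mp hmem with hme | hmE
      · -- min = e : use homogenization
        have hcoord : ∀ (z : Fin k → ℕ), (∀ i, z i ∈ ↑(insert e E) ∪ B') →
            (⨅ i, z i) = e → ∀ i, z i = e ∨ z i ∈ B' := by
          intro z hz hze i
          rcases hz i with hzi | hzi
          · rw [Finset.coe_insert] at hzi
            rcases hzi with hzi | hzi
            · exact Or.inl hzi
            · exfalso
              have h1 : z i < e := hEB _ hzi e heB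
              have h2 : e ≤ z i := hze ▸ inf_le' z i
              omega
          · exact Or.inr hzi
        exact hB'key x x' (hcoord x hx hme) (hcoord x' hx' (hmeq ▸ hme))
          hme (hmeq ▸ hme) hrk hregx hregx'
      · -- min ∈ E : use induction hypothesis
        have hcoord : ∀ (z : Fin k → ℕ), (∀ i, z i ∈ ↑(insert e E) ∪ B') →
            ∀ i, z i ∈ ↑E ∪ B := by
          intro z hz i
          rcases hz i with hzi | hzi
          · rw [Finset.coe_insert] at hzi
            rcases hzi with hzi | hzi
            · exact Or.inr (hzi ▸ heB)
            · exact Or.inl hzi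
          · exact Or.inr (hB'B hzi)
        exact hGood x x' (hcoord x hx) (hcoord x' hx') hmE hmeq hrk hregx hregx'

/-- infinite form with counting -/
theorem main_inf {k r p : ℕ} (hk : 0 < k) (hr : 0 < r) (hp : 0 < p)
    (F : (Fin k → ℕ) → (Fin r → ℕ)) :
    ∃ E : Finset ℕ, E.card = p ∧
      (regressiveValues F {x | ∀ i, x i ∈ E}).Finite ∧
      (regressiveValues F {x | ∀ i, x i ∈ E}).ncard ≤ k ^ k * p := by
  classical
  haveI : Nonempty (Fin k) := ⟨⟨0, hk⟩⟩
  obtain ⟨E, B, hEA, hEc, hBA, hBinf, hEB, hGood⟩ :=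
    recE hk hr F p Set.univ Set.infinite_univ
  set G : ((Fin k → Fin k) × {a // a ∈ E}) → (Fin r → ℕ) := fun z =>
    if h : ∃ x : Fin k → ℕ, (∀ i, x i ∈ E) ∧ (⨅ i, x i) = ↑z.2 ∧
        (∀ i, rkT x i = ↑(z.1 i)) ∧ RegT F x
    then F h.choose else fun _ => 0 with hG
  have hsub : regressiveValues F {x | ∀ i, x i ∈ E} ⊆ Set.range G := by
    rintro y ⟨x, hxB, rfl, hlt⟩
    have hreg : RegT F x := hlt
    have hm : (⨅ i, x i) ∈ E := by
      have := inf_mem hk x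
      obtain ⟨i, _, hi⟩ := Finset.mem_image.mp this
      rw [← hi]
      exact hxB i
    refine ⟨((fun i => ⟨rkT x i, rkT_lt hk x i⟩), ⟨⨅ i, x i, hm⟩), ?_⟩
    have hex : ∃ x' : Fin k → ℕ, (∀ i, x' i ∈ E) ∧ (⨅ i, x' i) = (⨅ i, x i) ∧
        (∀ i, rkT x' i = rkT x i) ∧ RegT F x' := ⟨x, hxB, rfl, fun _ => rfl, hreg⟩
    rw [hG]
    simp only [dif_pos hex]
    obtain ⟨h1, h2, h3, h4⟩ := hex.choose_spec
    exact hGood hex.choose x (fun i => Or.inl (h1 i)) (fun i => Or.inl (hxB i))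
      (h2.symm ▸ hm) h2 h3 h4 hreg
  have hfin : (regressiveValues F {x | ∀ i, x i ∈ E}).Finite :=
    (Set.finite_range G).subset hsub
  refine ⟨E, hEc, hfin, ?_⟩
  calc (regressiveValues F {x | ∀ i, x i ∈ E}).ncard
      ≤ (Set.range G).ncard := Set.ncard_le_ncard hsub (Set.finite_range G)
    _ ≤ Nat.card ((Fin k → Fin k) × {a // a ∈ E}) := by
        rw [← Set.ncard_univ, ← Set.image_univ]
        exact Set.ncard_image_le Set.finite_univ
    _ = k ^ k * p := by
        rw [Nat.card_prod, Nat.card_eq_fintype_card, Nat.card_eq_fintype_card,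
          Fintype.card_fun, Fintype.card_coe, hEc]
        simp [Fintype.card_fin]

/-- Theorem 0.4 (finite form of Theorem 0.2). -/
theorem stmt_3 (k r p : ℕ) (hk : 0 < k) (hr : 0 < r) (hp : 0 < p) :
    ∃ n : ℕ, ∀ F : (Fin k → ℕ) → (Fin r → ℕ),
      (∀ x : Fin k → ℕ, (∀ i, x i < n) → ∀ j, F x j < n) →
      ∃ E : Finset ℕ, E ⊆ Finset.range n ∧ E.card = p ∧
        (regressiveValues F {x | ∀ i, x i ∈ E}).Finite ∧
        (regressiveValues F {x | ∀ i, x i ∈ E}).ncard ≤ k ^ k * p := by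
  classical
  haveI : Nonempty (Fin k) := ⟨⟨0, hk⟩⟩
  by_contra hcon
  push_neg at hcon
  choose Fb hFb1 hFb2 using hcon
  -- truncated versions
  set F' : ℕ → (Fin k → ℕ) → (Fin r → ℕ) := fun n x =>
    if (⨆ j, Fb n x j) < ⨅ i, x i then Fb n x else fun _ => ⨅ i, x i with hF'
  have hF'bound : ∀ n x j, F' n x j ≤ ⨆ i, x i := by
    intro n x j
    rw [hF']
    dsimp only
    split_ifs with h
    · calc Fb n x j ≤ ⨆ j, Fb n x j := le_sup' (Fb n) x j
        _ ≤ ⨅ i, x i := le_of_lt h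
        _ ≤ x ⟨0, hk⟩ := inf_le' x _
        _ ≤ ⨆ i, x i := le_ciSup (Set.Finite.bddAbove (Set.finite_range _)) _
    · calc (⨅ i, x i) ≤ x ⟨0, hk⟩ := inf_le' x _
        _ ≤ ⨆ i, x i := le_ciSup (Set.Finite.bddAbove (Set.finite_range _)) _
  have hrv : ∀ n (B : Set (Fin k → ℕ)),
      regressiveValues (F' n) B = regressiveValues (Fb n) B := by
    intro n B
    ext y
    constructor
    · rintro ⟨x, hxB, rfl, hlt⟩
      rw [hF'] at hlt ⊢
      dsimp only at hlt ⊢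
      split_ifs at hlt ⊢ with h
      · exact ⟨x, hxB, rfl, hlt⟩
      · exfalso
        haveI : Nonempty (Fin r) := ⟨⟨0, hr⟩⟩
        rw [ciSup_const] at hlt
        exact lt_irrefl _ hlt
    · rintro ⟨x, hxB, rfl, hlt⟩
      refine ⟨x, hxB, ?_, ?_⟩
      · rw [hF']; dsimp only; rw [if_pos hlt]
      · exact hlt
  -- enumeration of tuples
  obtain ⟨en, hen⟩ := exists_surjective_nat (Fin k → ℕ)
  -- diagonalization
  have key : ∀ (m : ℕ) (S : {S : Set ℕ // S.Infinite}), ∃ (S' : Set ℕ) (v : Fin r → ℕ),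
      S' ⊆ S.1 ∧ S'.Infinite ∧ ∀ n ∈ S', F' n (en m) = v := by
    rintro m ⟨S, hS⟩
    haveI : Infinite ↥S := Set.infinite_coe_iff.mpr hS
    set N := ⨆ i, en m i with hN
    set φ : ↥S → (Fin r → Fin (N + 1)) := fun n j =>
      ⟨F' n.1 (en m) j, Nat.lt_succ_of_le (hF'bound n.1 (en m) j)⟩ with hφ
    obtain ⟨v0, hv0⟩ := Finite.exists_infinite_fiber φ
    have hinf : (φ ⁻¹' {v0} : Set ↥S).Infinite := Set.infinite_coe_iff.mp hv0
    refine ⟨Subtype.val '' (φ ⁻¹' {v0}), fun j => ↑(v0 j), ?_, ?_, ?_⟩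
    · rintro n ⟨n', _, rfl⟩; exact n'.2
    · exact hinf.image (Subtype.val_injective.injOn)
    · rintro n ⟨n', hn', rfl⟩
      funext j
      have := congrFun (Set.mem_preimage.mp hn' : φ n' = v0) j
      exact congrArg Fin.val this
  choose stepS stepv hsub hinf hval using key
  set Seq : ℕ → {S : Set ℕ // S.Infinite} :=
    fun m => Nat.rec ⟨Set.univ, Set.infinite_univ⟩ (fun m S => ⟨stepS m S, hinf m S⟩) m
    with hSeq
  have hSeqSucc : ∀ m, (Seq (m+1)).1 = stepS m (Seq m) := fun m => rfl
  have hmono : ∀ i j, i ≤ j → (Seq j).1 ⊆ (Seq i).1 := by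
    intro i j hij
    induction j with
    | zero => cases Nat.le_zero.mp hij; exact le_refl _
    | succ j ihj =>
      rcases Nat.lt_or_ge i (j+1) with h | h
      · exact (hsub j (Seq j)).trans (ihj (Nat.lt_succ_iff.mp h))
      · have : i = j + 1 := le_antisymm hij h
        subst this; exact le_refl _
  set G : (Fin k → ℕ) → (Fin r → ℕ) := fun x => stepv (Nat.find (hen x)) (Seq (Nat.find (hen x)))
    with hG
  have hagree : ∀ (x : Fin k → ℕ) (M n : ℕ), n ∈ (Seq M).1 → Nat.find (hen x) < M →
      F' n x = G x := by
    intro x M n hn hM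
    set m := Nat.find (hen x) with hm
    have hx : en m = x := Nat.find_spec (hen x)
    have hn' : n ∈ (Seq (m+1)).1 := hmono (m+1) M hM hn
    rw [hG]
    dsimp only
    rw [← hm, ← hx]
    exact hval m (Seq m) n (hSeqSucc m ▸ hn')
  -- apply the infinite theorem
  obtain ⟨E, hEc, hfin, hcard⟩ := main_inf hk hr hp G
  set Xfin : Finset (Fin k → ℕ) :=
    Finset.image (fun (g : Fin k → {a // a ∈ E}) i => ↑(g i)) Finset.univ with hXfin
  set M := Xfin.sup (fun x => Nat.find (hen x)) + 1 with hM
  obtain ⟨n, hnS, hngt⟩ := (Seq M).2.exists_gt (E.sup id)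
  have hagreeE : ∀ x : Fin k → ℕ, (∀ i, x i ∈ E) → F' n x = G x := by
    intro x hx
    apply hagree x M n hnS
    have hmem : x ∈ Xfin := by
      rw [hXfin]
      exact Finset.mem_image.mpr ⟨fun i => ⟨x i, hx i⟩, Finset.mem_univ _, rfl⟩
    calc Nat.find (hen x) ≤ Xfin.sup (fun x => Nat.find (hen x)) :=
          Finset.le_sup (f := fun x => Nat.find (hen x)) hmem
      _ < M := hM ▸ Nat.lt_succ_self _
  have hrvE : regressiveValues (F' n) {x | ∀ i, x i ∈ E} =
      regressiveValues G {x | ∀ i, x i ∈ E} := by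
    ext y
    constructor
    · rintro ⟨x, hxB, rfl, hlt⟩
      exact ⟨x, hxB, (hagreeE x hxB).symm, hlt⟩
    · rintro ⟨x, hxB, rfl, hlt⟩
      exact ⟨x, hxB, hagreeE x hxB, hlt⟩
  have hsubE : E ⊆ Finset.range n := by
    intro a ha
    rw [Finset.mem_range]
    calc a = id a := rfl
      _ ≤ E.sup id := Finset.le_sup ha
      _ < n := hngt
  have hbad := hFb2 n E hsubE hEc
  rw [← hrv n, hrvE] at hbad
  exact absurd hcard (by simpa [hfin] using hbad)
end

section
/- For all k, p > 0 there exists n such that for every regressive function F: S_k([n]) → [n] there exists E ∈ S_p([n]) such that for all x, y ∈ S_k(E), if min(x) = min(y) then F(x) = F(y). -/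
/-!
Thin out an infinite set one minimum at a time: with `m` the minimum of the current infinite set
`O`, pass to an infinite `T ⊆ O ∩ (m, ∞)` on which `s ↦ F (insert m s)` is constant. On the set of
successive minima, `F` depends only on the minimum. With finitely many colours this gives the
infinite Ramsey theorem (induction on `k`, then pigeonhole over the minima); for regressive `F`
the values of `s ↦ F (insert m s)` lie below `m`, so Ramsey's theorem performs each thinning step.
The finite statement follows by compactness: the limit along a non-principal ultrafilter of
counterexamples `F n` on `[n]` is regressive on all of `ℕ`, and a `p`-subset of an infinite
min-homogeneous set of the limit is min-homogeneous for `F n` for some `n`.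
-/

open Set Filter

def IsMinHomogeneous {α : Type*} (F : Finset ℕ → α) (k : ℕ) (A : Set ℕ) : Prop :=
  ∀ x y : Finset ℕ, ↑x ⊆ A → ↑y ⊆ A → x.card = k → y.card = k →
    sInf (↑x : Set ℕ) = sInf (↑y : Set ℕ) → F x = F y

lemma Set.Infinite.inter_Ioi {α : Type*} [LinearOrder α] [LocallyFiniteOrderBot α] {O : Set α}
    (hO : O.Infinite) (m : α) : (O ∩ Ioi m).Infinite := by
  simpa [sdiff_eq, compl_Iic] using hO.sdiff (finite_Iic m)

lemma Finset.sInf_coe_mem {x : Finset ℕ} (hx : x.Nonempty) : sInf (↑x : Set ℕ) ∈ x :=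
  Nat.sInf_mem (coe_nonempty.2 hx)

lemma sInf_insert_of_subset_Ioi {m : ℕ} {s : Finset ℕ} (hs : ↑s ⊆ Ioi m) :
    sInf (↑(insert m s) : Set ℕ) = m := by
  refine le_antisymm (Nat.sInf_le (by simp)) (le_csInf ⟨m, by simp⟩ ?_)
  rintro b hb
  rcases Finset.mem_insert.1 hb with rfl | hb
  · exact le_rfl
  · exact (hs hb).le

lemma card_insert_of_subset_Ioi {m : ℕ} {s : Finset ℕ} (hs : ↑s ⊆ Ioi m) :
    (insert m s).card = s.card + 1 :=
  Finset.card_insert_of_notMem fun hm => lt_irrefl m (hs hm)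

lemma eventually_subset_range (s : Finset ℕ) : ∀ᶠ n in atTop, s ⊆ Finset.range n :=
  eventually_atTop.2
    ⟨_, fun _ hn => s.subset_range_sup_succ.trans (Finset.range_subset_range.2 hn)⟩

lemma exists_mem_infinite_fiber {β α : Type*} [Infinite β] {C : Set α} (hC : C.Finite)
    (g : β → α) (hg : ∀ i, g i ∈ C) : ∃ v ∈ C, {i | g i = v}.Infinite := by
  by_contra! hfin
  exact infinite_univ (Finite.of_finite_fibers g (hC.subset (by rintro _ ⟨i, -, rfl⟩; exact hg i))
    fun v hv => by simpa [preimage] using hfin v (by obtain ⟨i, -, rfl⟩ := hv; exact hg i))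

theorem exists_strictMono_of_thinning {α : Type*} (f : Finset ℕ → α) (k : ℕ) (C : Set α)
    {S : Set ℕ} (hS : S.Infinite)
    (thin : ∀ O ⊆ S, O.Infinite → ∃ T ⊆ O ∩ Ioi (sInf O), T.Infinite ∧ ∃ v ∈ C,
      ∀ s : Finset ℕ, ↑s ⊆ T → s.card = k → f (insert (sInf O) s) = v) :
    ∃ a : ℕ → ℕ, StrictMono a ∧ range a ⊆ S ∧ ∃ g : ℕ → α, (∀ i, g i ∈ C) ∧
      ∀ i (x : Finset ℕ), ↑x ⊆ range a → x.card = k + 1 → sInf (↑x : Set ℕ) = a i →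
        f x = g i := by
  -- a default value of `α` lets `choose!` produce non-dependent functions
  have : Nonempty α := let ⟨_, _, _, v, _⟩ := thin S subset_rfl hS; ⟨v⟩
  choose! next hnext_sub hnext_inf g hgC hg using thin
  set O : ℕ → Set ℕ := fun i => next^[i] S
  have hO_succ (i : ℕ) : O (i + 1) = next (O i) := Function.iterate_succ_apply' next i S
  have hO (i : ℕ) : O i ⊆ S ∧ (O i).Infinite := by
    induction i with
    | zero => exact ⟨subset_rfl, hS⟩
    | succ i ih =>
      rw [hO_succ]
      exact ⟨(hnext_sub _ ih.1 ih.2).trans (inter_subset_left.trans ih.1), hnext_inf _ ih.1 ih.2⟩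
  have hO_lt (i : ℕ) : O (i + 1) ⊆ O i ∩ Ioi (sInf (O i)) :=
    hO_succ i ▸ hnext_sub _ (hO i).1 (hO i).2
  have hO_anti : Antitone O := antitone_nat_of_succ_le fun i => (hO_lt i).trans inter_subset_left
  set a : ℕ → ℕ := fun i => sInf (O i)
  have ha_mem (i : ℕ) : a i ∈ O i := Nat.sInf_mem (hO i).2.nonempty
  have ha_mono : StrictMono a := strictMono_nat_of_lt_succ fun i => (hO_lt i (ha_mem (i + 1))).2
  refine ⟨a, ha_mono, range_subset_iff.2 fun i => (hO i).1 (ha_mem i), fun i => g (O i),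
    fun i => hgC _ (hO i).1 (hO i).2, fun i x hx hcard hmin => ?_⟩
  have hmem : a i ∈ x := hmin ▸ x.sInf_coe_mem (Finset.card_pos.1 (by omega))
  have htail : ↑(x.erase (a i)) ⊆ O (i + 1) := by
    intro b hb
    obtain ⟨hba, hbx⟩ := Finset.mem_erase.1 hb
    obtain ⟨j, rfl⟩ := hx hbx
    have hij : a i < a j := lt_of_le_of_ne (hmin ▸ Nat.sInf_le hbx) (Ne.symm hba)
    exact hO_anti (ha_mono.lt_iff_lt.1 hij) (ha_mem j)
  rw [← Finset.insert_erase hmem]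
  exact hg _ (hO i).1 (hO i).2 _ (hO_succ i ▸ htail)
    (by rw [Finset.card_erase_of_mem hmem, hcard]; rfl)

theorem exists_infinite_homogeneous {α : Type*} {C : Set α} (hC : C.Finite) (k : ℕ) :
    ∀ (f : Finset ℕ → α) {S : Set ℕ}, S.Infinite →
      (∀ x : Finset ℕ, ↑x ⊆ S → x.card = k → f x ∈ C) →
      ∃ T ⊆ S, T.Infinite ∧ ∃ v ∈ C, ∀ x : Finset ℕ, ↑x ⊆ T → x.card = k → f x = v := by
  induction k with
  | zero =>
    intro f S hS hf
    refine ⟨S, subset_rfl, hS, f ∅, hf ∅ (by simp) rfl, fun x _ hx => ?_⟩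
    rw [Finset.card_eq_zero.1 hx]
  | succ k ih =>
    intro f S hS hf
    obtain ⟨a, ha_mono, ha_sub, g, hgC, hg⟩ := exists_strictMono_of_thinning f k C hS
      fun O hOS hO => ih (fun s => f (insert (sInf O) s)) (hO.inter_Ioi _) fun s hs hcard => by
        refine hf _ ?_ (by rw [card_insert_of_subset_Ioi (hs.trans inter_subset_right), hcard])
        rw [Finset.coe_insert]
        exact insert_subset (hOS (Nat.sInf_mem hO.nonempty))
          (hs.trans (inter_subset_left.trans hOS))
    obtain ⟨v, hvC, hv⟩ := exists_mem_infinite_fiber hC g hgC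
    refine ⟨a '' {i | g i = v}, (image_subset_range _ _).trans ha_sub,
      hv.image ha_mono.injective.injOn, v, hvC, fun x hx hcard => ?_⟩
    obtain ⟨i, hi, hai⟩ := hx (x.sInf_coe_mem (Finset.card_pos.1 (by omega)))
    rw [hg i x (hx.trans (image_subset_range _ _)) hcard hai.symm, hi]

theorem exists_infinite_isMinHomogeneous_of_regressive (k : ℕ) (F : Finset ℕ → ℕ)
    (hF : ∀ x : Finset ℕ, x.card = k → 0 < sInf (↑x : Set ℕ) → F x < sInf (↑x : Set ℕ)) :
    ∃ T ⊆ Ioi 0, T.Infinite ∧ IsMinHomogeneous F k T := by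
  cases k with
  | zero =>
    refine ⟨Ioi 0, subset_rfl, Ioi_infinite 0, fun x y _ _ hx hy _ => ?_⟩
    rw [Finset.card_eq_zero.1 hx, Finset.card_eq_zero.1 hy]
  | succ k =>
    obtain ⟨a, ha_mono, ha_pos, g, -, hg⟩ :=
      exists_strictMono_of_thinning F k univ (Ioi_infinite 0) fun O hO_pos hO => by
        have hm_pos : 0 < sInf O := hO_pos (Nat.sInf_mem hO.nonempty)
        obtain ⟨T, hT, hT_inf, v, -, hv⟩ := exists_infinite_homogeneous (finite_Iio (sInf O)) k
          (fun s => F (insert (sInf O) s)) (hO.inter_Ioi _) fun s hs hcard => by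
            have hmin := sInf_insert_of_subset_Ioi (hs.trans inter_subset_right)
            have := hF _ (by rw [card_insert_of_subset_Ioi (hs.trans inter_subset_right), hcard])
              (by rwa [hmin])
            rwa [hmin] at this
        exact ⟨T, hT, hT_inf, v, mem_univ v, hv⟩
    refine ⟨range a, ha_pos, infinite_range_of_injective ha_mono.injective,
      fun x y hx hy hx_card hy_card hxy => ?_⟩
    obtain ⟨i, hi⟩ := hx (x.sInf_coe_mem (Finset.card_pos.1 (by omega)))
    rw [hg i x hx hx_card hi.symm, hg i y hy hy_card (hxy ▸ hi.symm)]

theorem exists_regressive_limit (k : ℕ) (U : Ultrafilter ℕ) (hU : (U : Filter ℕ) ≤ atTop)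
    (F : ℕ → Finset ℕ → ℕ)
    (hF : ∀ n, ∀ x : Finset ℕ, x ⊆ Finset.range n → x.card = k →
      0 < sInf (↑x : Set ℕ) → F n x < sInf (↑x : Set ℕ)) :
    ∃ G : Finset ℕ → ℕ,
      (∀ x : Finset ℕ, x.card = k → 0 < sInf (↑x : Set ℕ) → G x < sInf (↑x : Set ℕ)) ∧
      ∀ x : Finset ℕ, x.card = k → 0 < sInf (↑x : Set ℕ) → ∀ᶠ n in U, F n x = G x := by
  have hlim (x : Finset ℕ) (hx : x.card = k) (hx_pos : 0 < sInf (↑x : Set ℕ)) :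
      ∃ v ∈ Iio (sInf (↑x : Set ℕ)), ∀ᶠ n in U, F n x = v := by
    refine (Ultrafilter.eventually_exists_mem_iff (finite_Iio _)).1 ?_
    filter_upwards [hU (eventually_subset_range x)] with n hn
    exact ⟨_, hF n x hn hx hx_pos, rfl⟩
  choose! G hG_lt hG_eq using hlim
  exact ⟨G, hG_lt, hG_eq⟩

theorem stmt_4_general (k p : ℕ) :
    ∃ n : ℕ, ∀ F : Finset ℕ → ℕ,
      (∀ x : Finset ℕ, x ⊆ Finset.range n → x.card = k → F x < n) →
      (∀ x : Finset ℕ, x ⊆ Finset.range n → x.card = k →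
        0 < sInf (↑x : Set ℕ) → F x < sInf (↑x : Set ℕ)) →
      ∃ E : Finset ℕ, E ⊆ Finset.range n ∧ E.card = p ∧
        ∀ x y : Finset ℕ, x ⊆ E → y ⊆ E → x.card = k → y.card = k →
          sInf (↑x : Set ℕ) = sInf (↑y : Set ℕ) → F x = F y := by
  obtain rfl | hk := k.eq_zero_or_pos
  · exact ⟨p, fun F _ _ => ⟨Finset.range p, subset_rfl, Finset.card_range p,
      fun x y _ _ hx hy _ => by rw [Finset.card_eq_zero.1 hx, Finset.card_eq_zero.1 hy]⟩⟩
  by_contra! hbad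
  choose F _ hF_reg hF_bad using hbad
  have hU : (hyperfilter ℕ : Filter ℕ) ≤ atTop := Nat.cofinite_eq_atTop ▸ hyperfilter_le_cofinite
  obtain ⟨G, hG_reg, hG_lim⟩ := exists_regressive_limit k _ hU F hF_reg
  obtain ⟨T, hT_pos, hT_inf, hT_hom⟩ := exists_infinite_isMinHomogeneous_of_regressive k G hG_reg
  obtain ⟨E, hET, hE_card⟩ := hT_inf.exists_subset_card_eq p
  have hFG : ∀ᶠ n in hyperfilter ℕ, ∀ x ∈ E.powersetCard k, F n x = G x := by
    refine (eventually_all_finset _).2 fun x hx => ?_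
    obtain ⟨hxE, hx⟩ := Finset.mem_powersetCard.1 hx
    exact hG_lim x hx (hT_pos (hET (hxE (x.sInf_coe_mem (Finset.card_pos.1 (hx ▸ hk))))))
  obtain ⟨n, hE_sub, hFG⟩ := (Eventually.and (hU (eventually_subset_range E)) hFG).exists
  obtain ⟨x, y, hxE, hyE, hx, hy, hxy, hne⟩ := hF_bad n E hE_sub hE_card
  rw [hFG x (Finset.mem_powersetCard.2 ⟨hxE, hx⟩), hFG y (Finset.mem_powersetCard.2 ⟨hyE, hy⟩)]
    at hne
  exact hne (hT_hom x y ((Finset.coe_subset.2 hxE).trans hET) ((Finset.coe_subset.2 hyE).trans hET)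
    hx hy hxy)

/-- Theorem I: for regressive `F : S_k([n]) → [n]`, some `E ∈ S_p([n])` has
`F` depending only on the minimum on `S_k(E)`. Here `min x = sInf ↑x`. -/
theorem stmt_4 (k p : ℕ) (hk : 0 < k) (hp : 0 < p) :
    ∃ n : ℕ, ∀ F : Finset ℕ → ℕ,
      (∀ x : Finset ℕ, x ⊆ Finset.range n → x.card = k → F x < n) →
      (∀ x : Finset ℕ, x ⊆ Finset.range n → x.card = k →
        0 < sInf (↑x : Set ℕ) → F x < sInf (↑x : Set ℕ)) →
      ∃ E : Finset ℕ, E ⊆ Finset.range n ∧ E.card = p ∧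
        ∀ x y : Finset ℕ, x ⊆ E → y ⊆ E → x.card = k → y.card = k →
          sInf (↑x : Set ℕ) = sInf (↑y : Set ℕ) → F x = F y :=
  stmt_4_general k p
end

section
/- Let c, k > 0 and U be a function assignment for ℕ^k. Suppose that for all p > 0 there exist a finite A ⊆ ℕ^k and E ⊆ ℕ with |E| = p and E^k ⊆ A such that U(A) has at most c regressive values on E^k. Then for all p > 0 there exist a finite A ⊆ ℕ^k and E ⊆ ℕ with |E| = p and E^k ⊆ A such that U(A) has at most ot(k) regressive values on E^k. -/
/-!
Colour each `k`-tuple `x` of a large set `E` by the value `f x` if it is one of the at most `c`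
regressive values of `f` on `E^k`, and by a dummy colour otherwise. Coding a tuple by its set
of values together with its pattern of ranks, the hypergraph Ramsey theorem (for all set sizes
`r ≤ k` at once) yields a `p`-set `E' ⊆ E` on which this colouring only depends on the order
type of the tuple. Hence every regressive value on `E'^k` is determined by the order type of a
tuple producing it, and there are at most `ot k` of them.
-/

/-- A function assignment for `α`: to each finite `A ⊆ α` it assigns a
function from `A` to `A` (values outside `A` are irrelevant). -/
structure FunAssign (α : Type*) where
  U : Finset α → α → α
  maps : ∀ A : Finset α, ∀ x ∈ A, U A x ∈ A

/-- `x` and `y` have the same order type. -/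
def SameOrderType {k : ℕ} (x y : Fin k → ℕ) : Prop :=
  ∀ i j, x i < x j ↔ y i < y j

/-- `ot k`: the number of order types of elements of `ℕ^k`. -/
noncomputable def ot (k : ℕ) : ℕ :=
  Nat.card (Quot fun x y : Fin k → ℕ => SameOrderType x y)

/-- `f` has at most `c` regressive values on `E^k`. -/
def hasAtMostRegVals {k : ℕ} (f : (Fin k → ℕ) → (Fin k → ℕ))
    (E : Finset ℕ) (c : ℕ) : Prop :=
  {y : Fin k → ℕ | ∃ x : Fin k → ℕ, (∀ i, x i ∈ E) ∧ f x = y ∧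
      (⨆ i, y i) < ⨅ i, x i}.Finite ∧
  {y : Fin k → ℕ | ∃ x : Fin k → ℕ, (∀ i, x i ∈ E) ∧ f x = y ∧
      (⨆ i, y i) < ⨅ i, x i}.ncard ≤ c

open Finset

namespace Ramsey

variable {α C : Type*}

def IsHomogeneous (f : Finset α → C) (r : ℕ) (T : Finset α) : Prop :=
  ∃ c, ∀ t ⊆ T, #t = r → f t = c

def IsEndHomogeneous [LinearOrder α] (f : Finset α → C) (r : ℕ) (B : Finset α) : Prop :=
  ∀ b ∈ B, ∃ c, ∀ t ⊆ B.filter (b < ·), #t = r → f (insert b t) = c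

/-- The arrow relation `N → (n)^r_C`. -/
def Arrows (α C : Type*) (N n r : ℕ) : Prop :=
  ∀ S : Finset α, N ≤ #S → ∀ f : Finset α → C, ∃ T ⊆ S, n ≤ #T ∧ IsHomogeneous f r T

theorem IsHomogeneous.mono {f : Finset α → C} {r : ℕ} {T T' : Finset α}
    (h : IsHomogeneous f r T) (hT' : T' ⊆ T) : IsHomogeneous f r T' :=
  let ⟨c, hc⟩ := h
  ⟨c, fun t ht => hc t (ht.trans hT')⟩

theorem isHomogeneous_zero (f : Finset α → C) (T : Finset α) : IsHomogeneous f 0 T :=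
  ⟨f ∅, fun _ _ ht => by rw [card_eq_zero.mp ht]⟩

theorem exists_isEndHomogeneous [LinearOrder α] {r : ℕ} (hr : ∀ n, ∃ N, Arrows α C N n r)
    (M : ℕ) : ∃ N, ∀ S : Finset α, N ≤ #S → ∀ f : Finset α → C,
      ∃ B ⊆ S, M ≤ #B ∧ IsEndHomogeneous f r B := by
  induction M with
  | zero => exact ⟨0, fun S _ f => ⟨∅, empty_subset _, le_rfl, by simp [IsEndHomogeneous]⟩⟩
  | succ M ih =>
    obtain ⟨N, hN⟩ := ih
    obtain ⟨N', hN'⟩ := hr N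
    refine ⟨N' + 1, fun S hS f => ?_⟩
    have hSne : S.Nonempty := card_pos.mp (by omega)
    set a := S.min' hSne
    have ha : a ∈ S := S.min'_mem hSne
    -- make `S \ {a}` homogeneous for `t ↦ f (insert a t)`, then recurse inside it
    obtain ⟨T, hTS, hNT, c, hc⟩ := hN' (S.erase a)
      (by rw [card_erase_of_mem ha]; omega) (fun t => f (insert a t))
    obtain ⟨B, hBT, hMB, hB⟩ := hN T hNT f
    have hBS : B ⊆ S.erase a := hBT.trans hTS
    have ha_lt : ∀ b ∈ B, a < b := fun b hb =>
      (S.min'_le b (mem_of_mem_erase (hBS hb))).lt_of_ne (ne_of_mem_erase (hBS hb)).symm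
    have haB : a ∉ B := fun h => lt_irrefl a (ha_lt a h)
    refine ⟨insert a B, insert_subset ha (hBS.trans (erase_subset a S)),
      by rw [card_insert_of_notMem haB]; omega, ?_⟩
    intro b hb
    rcases mem_insert.mp hb with rfl | hb
    · refine ⟨c, fun t ht => hc t (fun x hx => hBT ?_)⟩
      have := mem_filter.mp (ht hx)
      exact (mem_insert.mp this.1).resolve_left (ne_of_gt this.2)
    · obtain ⟨c, hc⟩ := hB b hb
      refine ⟨c, fun t ht => hc t (fun x hx => ?_)⟩
      obtain ⟨hxB, hbx⟩ := mem_filter.mp (ht hx)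
      refine mem_filter.mpr ⟨(mem_insert.mp hxB).resolve_left ?_, hbx⟩
      rintro rfl
      exact lt_asymm hbx (ha_lt b hb)

theorem exists_arrows [LinearOrder α] [Finite C] (r n : ℕ) : ∃ N, Arrows α C N n r := by
  induction r generalizing n with
  | zero => exact ⟨n, fun S hS f => ⟨S, subset_rfl, hS, isHomogeneous_zero f S⟩⟩
  | succ r ih =>
    classical
    have := Fintype.ofFinite C
    obtain ⟨N, hN⟩ := exists_isEndHomogeneous ih (Fintype.card C * n)
    refine ⟨N, fun S hS f => ?_⟩
    have : Nonempty C := ⟨f ∅⟩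
    obtain ⟨B, hBS, hB, hhom⟩ := hN S hS f
    -- every point of `B` carries a colour; a set of points of one colour is homogeneous
    choose! col hcol using hhom
    obtain ⟨c, -, hc⟩ := exists_le_card_fiber_of_mul_le_card_of_maps_to
      (fun b _ => mem_univ (col b)) univ_nonempty (by simpa using hB)
    refine ⟨B.filter (col · = c), (filter_subset _ _).trans hBS, hc, c, fun t ht htc => ?_⟩
    have htne : t.Nonempty := card_pos.mp (by omega)
    set m := t.min' htne
    obtain ⟨hmB, hmc⟩ := mem_filter.mp (ht (t.min'_mem htne))
    rw [← insert_erase (t.min'_mem htne), ← hmc]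
    refine hcol m hmB _ (fun x hx => mem_filter.mpr
      ⟨(mem_filter.mp (ht (mem_of_mem_erase hx))).1, ?_⟩)
      (by rw [card_erase_of_mem (t.min'_mem htne)]; omega)
    exact (t.min'_le x (mem_of_mem_erase hx)).lt_of_ne (ne_of_mem_erase hx).symm

theorem exists_isHomogeneous_forall_le [LinearOrder α] [Finite C] (k n : ℕ) :
    ∃ N, ∀ S : Finset α, N ≤ #S → ∀ f : Finset α → C,
      ∃ T ⊆ S, n ≤ #T ∧ ∀ r ≤ k, IsHomogeneous f r T := by
  induction k with
  | zero =>
    exact ⟨n, fun S hS f => ⟨S, subset_rfl, hS, fun r hr => by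
      rw [Nat.le_zero.mp hr]; exact isHomogeneous_zero f S⟩⟩
  | succ k ih =>
    obtain ⟨N, hN⟩ := ih
    obtain ⟨N', hN'⟩ := exists_arrows (α := α) (C := C) (k + 1) N
    refine ⟨N', fun S hS f => ?_⟩
    obtain ⟨T, hTS, hNT, hT⟩ := hN' S hS f
    obtain ⟨T', hT'T, hnT', hT'⟩ := hN T hNT f
    refine ⟨T', hT'T.trans hTS, hnT', fun r hr => ?_⟩
    rcases Nat.of_le_succ hr with hr | rfl
    · exact hT' r hr
    · exact hT.mono hT'T

end Ramsey

theorem Finset.card_image_pair_eq_card_image {ι β γ : Type*} [DecidableEq β] [DecidableEq γ]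
    {s : Finset ι} {f : ι → β} {g : ι → γ} (h : ∀ i ∈ s, ∀ j ∈ s, f i = f j → g i = g j) :
    #(s.image fun i => (f i, g i)) = #(s.image f) := by
  have : s.image f = (s.image fun i => (f i, g i)).image Prod.fst := by rw [image_image]; rfl
  rw [this, card_image_of_injOn (s := s.image _)]
  rintro _ hp _ hq (hpq : _ = _)
  obtain ⟨i, hi, rfl⟩ := mem_image.mp hp
  obtain ⟨j, hj, rfl⟩ := mem_image.mp hq
  exact Prod.ext hpq (h i hi j hj hpq)

theorem Finset.card_image_eq_card_image_of_iff {ι β γ : Type*} [DecidableEq β] [DecidableEq γ]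
    {s : Finset ι} {f : ι → β} {g : ι → γ} (h : ∀ i ∈ s, ∀ j ∈ s, f i = f j ↔ g i = g j) :
    #(s.image f) = #(s.image g) := by
  rw [← card_image_pair_eq_card_image fun i hi j hj => (h i hi j hj).1,
    ← card_image_pair_eq_card_image (f := g) (g := f) fun i hi j hj => (h i hi j hj).2,
    ← card_image_of_injective _ Prod.swap_injective, image_image]
  rfl

theorem Nat.count_mem_image {ι : Type*} [Fintype ι] (x : ι → ℕ) (i : ι) :
    Nat.count (· ∈ univ.image x) (x i) = #(({j | x j < x i} : Finset ι).image x) := by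
  rw [Nat.count_eq_card_filter_range]
  congr 1
  ext v
  simp only [mem_filter, mem_range, mem_image, mem_univ, true_and]
  constructor
  · rintro ⟨hv, j, rfl⟩
    exact ⟨j, hv, rfl⟩
  · rintro ⟨j, hj, rfl⟩
    exact ⟨hj, j, rfl⟩

section OrderType

variable {k : ℕ} {x y : Fin k → ℕ}

theorem sameOrderType_iff :
    SameOrderType x y ↔ (fun i j => x i < x j) = fun i j => y i < y j := by
  simp only [funext_iff, eq_iff_iff]
  rfl

theorem SameOrderType.eq_iff (h : SameOrderType x y) (i j : Fin k) : x i = x j ↔ y i = y j := by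
  have := h i j
  have := h j i
  omega

theorem SameOrderType.card_image (h : SameOrderType x y) : #(univ.image x) = #(univ.image y) :=
  card_image_eq_card_image_of_iff fun i _ j _ => h.eq_iff i j

theorem SameOrderType.of_quot_mk_eq (h : Quot.mk SameOrderType x = Quot.mk SameOrderType y) :
    SameOrderType x y :=
  sameOrderType_iff.2 <| congrArg (Quot.lift (fun x : Fin k → ℕ => fun i j => x i < x j)
    fun _ _ h => sameOrderType_iff.1 h) h

instance SameOrderType.finite_quot : Finite (Quot (SameOrderType (k := k))) :=
  Finite.of_injective (Quot.lift (fun x : Fin k → ℕ => fun i j => x i < x j)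
    fun _ _ h => sameOrderType_iff.1 h) <| by
    rintro ⟨x⟩ ⟨y⟩ h
    exact Quot.sound (sameOrderType_iff.2 h)

theorem ncard_le_ot_of_subset_image {β : Type*} {S : Set β} {D : Set (Fin k → ℕ)}
    {g : (Fin k → ℕ) → β} (hS : S ⊆ g '' D)
    (hg : ∀ x ∈ D, ∀ y ∈ D, SameOrderType x y → g x = g y) : S.ncard ≤ ot k := by
  choose w hwD hw using fun s : S => hS s.2
  rw [← Nat.card_coe_set_eq]
  refine Nat.card_le_card_of_injective (fun s => Quot.mk _ (w s)) fun s t hst => Subtype.ext ?_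
  rw [← hw s, ← hw t]
  exact hg _ (hwD s) _ (hwD t) (.of_quot_mk_eq hst)

def orderShape (x : Fin k → ℕ) (i : Fin k) : Fin k :=
  ⟨Nat.count (· ∈ univ.image x) (x i), by
    calc _ < #(univ.image x) := by
          have := Nat.count_lt_card (univ.image x).finite_toSet (mem_image_of_mem x (mem_univ i))
          rwa [finite_toSet_toFinset] at this
      _ ≤ k := card_image_le.trans (by simp)⟩

theorem nth_orderShape (x : Fin k → ℕ) (i : Fin k) :
    Nat.nth (· ∈ univ.image x) (orderShape x i) = x i :=
  Nat.nth_count (mem_image_of_mem x (mem_univ i))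

theorem SameOrderType.orderShape_eq (h : SameOrderType x y) : orderShape x = orderShape y := by
  ext i
  simp only [orderShape, Nat.count_mem_image, h _ i]
  exact card_image_eq_card_image_of_iff fun a _ b _ => h.eq_iff a b

end OrderType

theorem exists_subset_coloring_eq_of_sameOrderType (k : ℕ) (C : Type*) [Finite C] (n : ℕ) :
    ∃ N, ∀ E : Finset ℕ, N ≤ #E → ∀ χ : (Fin k → ℕ) → C, ∃ E' ⊆ E, #E' = n ∧
      ∀ x y : Fin k → ℕ, (∀ i, x i ∈ E') → (∀ i, y i ∈ E') → SameOrderType x y → χ x = χ y := by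
  obtain ⟨N, hN⟩ := Ramsey.exists_isHomogeneous_forall_le (α := ℕ) (C := (Fin k → Fin k) → C) k n
  refine ⟨N, fun E hE χ => ?_⟩
  -- a tuple is recovered from its set of values `t` and its shape `σ` as `Nat.nth (· ∈ t) ∘ σ`
  obtain ⟨T, hTE, hnT, hT⟩ := hN E hE fun t σ => χ fun i => Nat.nth (· ∈ t) (σ i)
  obtain ⟨E', hE'T, hE'⟩ := exists_subset_card_eq hnT
  refine ⟨E', hE'T.trans hTE, hE', fun x y hx hy hxy => ?_⟩
  have himage : ∀ z : Fin k → ℕ, (∀ i, z i ∈ E') → univ.image z ⊆ T := by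
    intro z hz
    simpa [image_subset_iff] using fun i => hE'T (hz i)
  obtain ⟨c, hc⟩ := hT _ (card_image_le.trans (by simp) : #(univ.image x) ≤ k)
  have hxy' := congrFun ((hc _ (himage x hx) rfl).trans
    (hc _ (himage y hy) hxy.card_image.symm).symm) (orderShape x)
  simp only [nth_orderShape] at hxy'
  simpa only [hxy.orderShape_eq, nth_orderShape] using hxy'

def regVals {k : ℕ} (f : (Fin k → ℕ) → (Fin k → ℕ)) (E : Finset ℕ) : Set (Fin k → ℕ) :=
  {y | ∃ x : Fin k → ℕ, (∀ i, x i ∈ E) ∧ f x = y ∧ (⨆ i, y i) < ⨅ i, x i}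

theorem regVals_mono {k : ℕ} (f : (Fin k → ℕ) → (Fin k → ℕ)) {E E' : Finset ℕ} (h : E' ⊆ E) :
    regVals f E' ⊆ regVals f E := by
  rintro y ⟨x, hx, rfl, hreg⟩
  exact ⟨x, fun i => h (hx i), rfl, hreg⟩

theorem stmt_9_general (c k : ℕ) (V : FunAssign (Fin k → ℕ))
    (h : ∀ p : ℕ, 0 < p → ∃ (A : Finset (Fin k → ℕ)) (E : Finset ℕ),
      E.card = p ∧ (∀ x : Fin k → ℕ, (∀ i, x i ∈ E) → x ∈ A) ∧
      hasAtMostRegVals (V.U A) E c) :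
    ∀ p : ℕ, 0 < p → ∃ (A : Finset (Fin k → ℕ)) (E : Finset ℕ),
      E.card = p ∧ (∀ x : Fin k → ℕ, (∀ i, x i ∈ E) → x ∈ A) ∧
      hasAtMostRegVals (V.U A) E (ot k) := by
  classical
  intro p _
  -- `N` is fixed before `E`, so the colours cannot be the regressive values on `E` themselves
  obtain ⟨N, hN⟩ := exists_subset_coloring_eq_of_sameOrderType k (Option (Fin c)) p
  obtain ⟨A, E, hE, hEA, hfin, hcard⟩ := h (max N 1) (by omega)
  set f := V.U A
  have : Fintype (regVals f E) := hfin.fintype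
  obtain ⟨code⟩ : Nonempty (regVals f E ↪ Fin c) := Function.Embedding.nonempty_of_card_le <| by
    rwa [Fintype.card_fin, ← Set.toFinset_card, ← Set.ncard_eq_toFinset_card']
  obtain ⟨E', hE'E, hE', hconst⟩ := hN E (hE ▸ le_max_left N 1)
    fun x => if hx : f x ∈ regVals f E then some (code ⟨f x, hx⟩) else none
  set D := {x : Fin k → ℕ | (∀ i, x i ∈ E') ∧ (⨆ i, f x i) < ⨅ i, x i}
  have hD : regVals f E' ⊆ f '' D := by
    rintro _ ⟨x, hx, rfl, hreg⟩
    exact ⟨x, ⟨hx, hreg⟩, rfl⟩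
  have hfD : ∀ x ∈ D, ∀ y ∈ D, SameOrderType x y → f x = f y := by
    rintro x ⟨hx, hxreg⟩ y ⟨hy, hyreg⟩ hxy
    have hfx : f x ∈ regVals f E := ⟨x, fun i => hE'E (hx i), rfl, hxreg⟩
    have hfy : f y ∈ regVals f E := ⟨y, fun i => hE'E (hy i), rfl, hyreg⟩
    have := hconst x y hx hy hxy
    rw [dif_pos hfx, dif_pos hfy, Option.some_inj, code.injective.eq_iff] at this
    exact congrArg Subtype.val this
  exact ⟨A, E', hE', fun x hx => hEA x fun i => hE'E (hx i),
    hfin.subset (regVals_mono f hE'E), ncard_le_ot_of_subset_image hD hfD⟩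

/-- Lemma 3.12. -/
theorem stmt_9 (c k : ℕ) (hc : 0 < c) (hk : 0 < k) (V : FunAssign (Fin k → ℕ))
    (h : ∀ p : ℕ, 0 < p → ∃ (A : Finset (Fin k → ℕ)) (E : Finset ℕ),
      E.card = p ∧ (∀ x : Fin k → ℕ, (∀ i, x i ∈ E) → x ∈ A) ∧
      hasAtMostRegVals (V.U A) E c) :
    ∀ p : ℕ, 0 < p → ∃ (A : Finset (Fin k → ℕ)) (E : Finset ℕ),
      E.card = p ∧ (∀ x : Fin k → ℕ, (∀ i, x i ∈ E) → x ∈ A) ∧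
      hasAtMostRegVals (V.U A) E (ot k) :=
  stmt_9_general c k V h
end

section
/- Proposition A for #-decreasing holds if and only if Proposition B for #-decreasing holds. That is: (for all k, p > 0 and every #-decreasing function assignment U for ℕ^k, there exist a finite A ⊆ ℕ^k and E ⊆ ℕ with |E| = p and E^k ⊆ A such that U(A) has at most k^k regressive values on E^k) if and only if (for all k, p > 0 there exists n such that for every #-decreasing function assignment U for [n]^k, there exist A ⊆ [n]^k and E ⊆ [n] with |E| = p and E^k ⊆ A such that U(A) has at most k^k regressive values on E^k). -/
/-- `V` is #-decreasing as a function assignment for `D` (with `D = ℕ^k`, the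
usual notion; with `D = [n]^k`, the notion for `[n]^k`): for finite `A ⊆ D`
and `x ∈ D`, either the function extends, or it drops in sup norm at some `y`
of sup norm `> |x|`. -/
def SharpDecreasingOn {k : ℕ} (V : FunAssign (Fin k → ℕ))
    (D : Set (Fin k → ℕ)) : Prop :=
  ∀ A : Finset (Fin k → ℕ), ↑A ⊆ D → ∀ x ∈ D,
    (∀ y ∈ A, V.U A y = V.U (insert x A) y) ∨
    ∃ y ∈ A, (⨆ i, x i) < (⨆ i, y i) ∧
      (⨆ i, V.U (insert x A) y i) < (⨆ i, V.U A y i)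

/-- Proposition A for #-decreasing. -/
def PropASharp : Prop :=
  ∀ k p : ℕ, 0 < k → 0 < p → ∀ V : FunAssign (Fin k → ℕ),
    SharpDecreasingOn V Set.univ →
    ∃ (A : Finset (Fin k → ℕ)) (E : Finset ℕ), E.card = p ∧
      (∀ x : Fin k → ℕ, (∀ i, x i ∈ E) → x ∈ A) ∧
      hasAtMostRegVals (V.U A) E (k ^ k)

/-- Proposition B for #-decreasing. -/
def PropBSharp : Prop :=
  ∀ k p : ℕ, 0 < k → 0 < p → ∃ n : ℕ, ∀ V : FunAssign (Fin k → ℕ),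
    SharpDecreasingOn V {x | ∀ i, x i < n} →
    ∃ (A : Finset (Fin k → ℕ)) (E : Finset ℕ),
      (↑A : Set (Fin k → ℕ)) ⊆ {x | ∀ i, x i < n} ∧
      E ⊆ Finset.range n ∧ E.card = p ∧
      (∀ x : Fin k → ℕ, (∀ i, x i ∈ E) → x ∈ A) ∧
      hasAtMostRegVals (V.U A) E (k ^ k)

/-!
Restricting a #-decreasing assignment for `ℕ^k` to `[n]^k` gives B ⇒ A. For A ⇒ B argue by
compactness: if B fails for `k, p`, pick for every `n` a counterexample `W n` on `[n]^k` and take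
the ultralimit `V` of the `W n` along a non-principal ultrafilter. Since each `U(A)` maps the
finite set `A` into itself, `V(A)` is well defined and agrees with `W n (A)` for almost all `n`.
Every finite configuration lies in `[n]^k` for almost all `n`, so `V` is #-decreasing on `ℕ^k`,
and a witness `A, E` that A provides for `V` is then a witness for some `W n`.
-/

open Filter

theorem Ultrafilter.exists_mem_eventually_eq {ι α : Type*} {φ : Ultrafilter ι} {f : ι → α}
    {s : Set α} (hs : s.Finite) (hf : ∀ i, f i ∈ s) : ∃ a ∈ s, ∀ᶠ i in φ, f i = a := by
  obtain ⟨a, ha, hφ⟩ := (φ.map f).eq_pure_of_finite_mem hs (Ultrafilter.mem_map.2 (univ_mem' hf))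
  exact ⟨a, ha, show {a} ∈ φ.map f by simp [hφ]⟩

namespace FunAssign

variable {ι α : Type*}

theorem exists_eventually_eq (φ : Ultrafilter ι) (W : ι → FunAssign α) {A : Finset α}
    {x : α} (hx : x ∈ A) : ∃ a ∈ A, ∀ᶠ i in φ, (W i).U A x = a :=
  Ultrafilter.exists_mem_eventually_eq A.finite_toSet fun i => (W i).maps A x hx

open Classical in
noncomputable def ultralimit (φ : Ultrafilter ι) (W : ι → FunAssign α) : FunAssign α where
  U A x := if hx : x ∈ A then (exists_eventually_eq φ W hx).choose else x
  maps A x hx := by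
    simpa only [dif_pos hx] using (exists_eventually_eq φ W hx).choose_spec.1

theorem eventually_eq_ultralimit (φ : Ultrafilter ι) (W : ι → FunAssign α) (A : Finset α) :
    ∀ᶠ i in φ, ∀ x ∈ A, (W i).U A x = (ultralimit φ W).U A x := by
  refine (eventually_all_finset A).2 fun x hx => ?_
  simpa only [ultralimit, dif_pos hx] using (exists_eventually_eq φ W hx).choose_spec.2

end FunAssign

theorem SharpDecreasingOn.mono {k : ℕ} {V : FunAssign (Fin k → ℕ)} {D D' : Set (Fin k → ℕ)}
    (hV : SharpDecreasingOn V D) (hD : D' ⊆ D) : SharpDecreasingOn V D' :=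
  fun A hA x hx => hV A (hA.trans hD) x (hD hx)

theorem sharpDecreasingOn_univ_ultralimit {k : ℕ} {ι : Type*} (φ : Ultrafilter ι)
    (W : ι → FunAssign (Fin k → ℕ)) (D : ι → Set (Fin k → ℕ))
    (hW : ∀ i, SharpDecreasingOn (W i) (D i))
    (hD : ∀ S : Finset (Fin k → ℕ), ∀ᶠ i in φ, ↑S ⊆ D i) :
    SharpDecreasingOn (FunAssign.ultralimit φ W) Set.univ := by
  intro A _ x _
  obtain ⟨i, hA, hxA, hsub⟩ := ((FunAssign.eventually_eq_ultralimit φ W A).and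
    ((FunAssign.eventually_eq_ultralimit φ W (insert x A)).and (hD (insert x A)))).exists
  have hAD : (↑A : Set (Fin k → ℕ)) ⊆ D i :=
    (Finset.coe_subset.2 (Finset.subset_insert x A)).trans hsub
  have hxD : x ∈ D i := hsub (Finset.mem_insert_self x A)
  rcases hW i A hAD x hxD with hext | ⟨y, hy, hxy, hdrop⟩
  · refine Or.inl fun y hy => ?_
    rw [← hA y hy, ← hxA y (Finset.mem_insert_of_mem hy)]
    exact hext y hy
  · refine Or.inr ⟨y, hy, hxy, ?_⟩
    rwa [← hA y hy, ← hxA y (Finset.mem_insert_of_mem hy)]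

theorem eventually_subset_box {k : ℕ} (S : Finset (Fin k → ℕ)) :
    ∀ᶠ n in atTop, (↑S : Set (Fin k → ℕ)) ⊆ {x | ∀ i, x i < n} :=
  ((eventually_all_finset S).2 fun y _ => eventually_all.2 fun i => eventually_gt_atTop (y i)).mono
    fun _ hn y hy => hn y hy

theorem hasAtMostRegVals_congr {k : ℕ} {f g : (Fin k → ℕ) → (Fin k → ℕ)} {E : Finset ℕ} {c : ℕ}
    (hfg : ∀ x : Fin k → ℕ, (∀ i, x i ∈ E) → f x = g x) :
    hasAtMostRegVals f E c ↔ hasAtMostRegVals g E c := by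
  have hvals : {y : Fin k → ℕ | ∃ x : Fin k → ℕ, (∀ i, x i ∈ E) ∧ f x = y ∧
      (⨆ i, y i) < ⨅ i, x i} = {y | ∃ x : Fin k → ℕ, (∀ i, x i ∈ E) ∧ g x = y ∧
      (⨆ i, y i) < ⨅ i, x i} :=
    Set.ext fun y => exists_congr fun x => and_congr_right fun hx => by rw [hfg x hx]
  unfold hasAtMostRegVals
  rw [hvals]

/-- Lemma 3.11 (i): Proposition A for #-decreasing is equivalent to
Proposition B for #-decreasing. -/
theorem stmt_10 : PropASharp ↔ PropBSharp := by
  refine ⟨fun hA k p hk hp => ?_, fun hB k p hk hp V hV => ?_⟩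
  · by_contra! hB
    choose W hWsharp hWbad using hB
    obtain ⟨A, E, hE, hEA, hreg⟩ := hA k p hk hp _
      (sharpDecreasingOn_univ_ultralimit (hyperfilter ℕ) W _ hWsharp
        fun S => (eventually_subset_box S).filter_mono Nat.hyperfilter_le_atTop)
    obtain ⟨n, hagree, hbox⟩ :=
      ((FunAssign.eventually_eq_ultralimit (hyperfilter ℕ) W A).and
        ((eventually_subset_box A).filter_mono Nat.hyperfilter_le_atTop)).exists
    have hEn : E ⊆ Finset.range n := fun e he =>
      Finset.mem_range.2 (hbox (hEA (fun _ => e) fun _ => he) ⟨0, hk⟩)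
    exact hWbad n A E hbox hEn hE hEA
      ((hasAtMostRegVals_congr fun x hx => hagree x (hEA x hx)).2 hreg)
  · obtain ⟨n, hn⟩ := hB k p hk hp
    obtain ⟨A, E, -, -, hE, hEA, hreg⟩ := hn V (hV.mono (Set.subset_univ _))
    exact ⟨A, E, hE, hEA, hreg⟩
end
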